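/- arXiv:0902.2444 — 6 statements merged into one kernel-verified Lean document; each statement's English description precedes it below -/
import Mathlib

section
/- Let G₁, G₂ be graphs with n₁, n₂ vertices respectively, and let G be a t-connected sum of G₁ and G₂ (glued along complete subgraphs on t vertices). Then for every k, c_k(G) = Σ_{i=0}^{k} [c_i(G₁)·C(n₂−t, k−i) + c_i(G₂)·C(n₁−t, k−i)] − C(n₁+n₂−t, k) + C(n₁+n₂−2t, k), where c_k(H) = Σ_{|W|=k} c(H|_W) counts connected components over all k-subsets. -/
/-!
Let `V = A ∪ B` with no edge between `A \ B` and `B \ A` and with `A ∩ B` a clique. For `W ⊆ V`,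
the components of `G[W ∩ A]` and of `G[W ∩ B]` map onto those of `G[W]`, injectively on each
side, because a path of `G[W]` can pass between `A \ B` and `B \ A` only through the clique
`W ∩ A ∩ B`. A component is hit from both sides exactly when it contains that clique, so
`c(G[W]) = c(G[W ∩ A]) + c(G[W ∩ B]) - [W ∩ A ∩ B ≠ ∅]`.
Summing over the `k`-subsets `W`, grouped by `T = W ∩ A` with `|T| = i`, gives
`∑ᵢ c_i(G[A]) C(|V \ A|, k - i)`, and the `k`-subsets meeting the `t` glued vertices number
`C(|V|, k) - C(|V| - t, k)`. For a `t`-connected sum, `G[A] ≅ G₁`, `G[B] ≅ G₂` and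
`|V| = n₁ + n₂ - t`.
-/

open Finset

/-- Number of connected components of the induced subgraph on `W`, summed over all
`k`-subsets, each minus 1: the `k`-th special graded Betti number of a graph. -/
noncomputable def graphB {V : Type} [Fintype V] [DecidableEq V] (k : ℕ) (G : SimpleGraph V) : ℤ :=
  ∑ W ∈ Finset.powersetCard k (Finset.univ : Finset V),
    ((Nat.card (G.induce (W : Set V)).ConnectedComponent : ℤ) - 1)

/-- `c_k(G)`: total number of connected components over all `k`-subsets. -/
noncomputable def graphC {V : Type} [Fintype V] [DecidableEq V] (k : ℕ) (G : SimpleGraph V) : ℕ :=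
  ∑ W ∈ Finset.powersetCard k (Finset.univ : Finset V),
    Nat.card (G.induce (W : Set V)).ConnectedComponent

/-- `G` is a `t`-connected sum of `G₁` and `G₂`. -/
def IsConnSum {V₁ V₂ V : Type} (t : ℕ) (G₁ : SimpleGraph V₁) (G₂ : SimpleGraph V₂)
    (G : SimpleGraph V) : Prop :=
  ∃ (f₁ : V₁ ↪ V) (f₂ : V₂ ↪ V) (F₁ : Set V₁) (F₂ : Set V₂),
    Nat.card F₁ = t ∧ Nat.card F₂ = t ∧
    (∀ x ∈ F₁, ∀ y ∈ F₁, x ≠ y → G₁.Adj x y) ∧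
    (∀ x ∈ F₂, ∀ y ∈ F₂, x ≠ y → G₂.Adj x y) ∧
    Set.range f₁ ∪ Set.range f₂ = Set.univ ∧
    Set.range f₁ ∩ Set.range f₂ = f₁ '' F₁ ∧
    f₁ '' F₁ = f₂ '' F₂ ∧
    (∀ a b, G.Adj a b ↔
      ((∃ x y, G₁.Adj x y ∧ f₁ x = a ∧ f₁ y = b) ∨
       (∃ x y, G₂.Adj x y ∧ f₂ x = a ∧ f₂ y = b)))

/-- Iterated `t`-connected sums of a list of graphs. -/
inductive IsIterConnSum (t : ℕ) :
    List ((W : Type) × SimpleGraph W) → ((W : Type) × SimpleGraph W) → Prop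
  | single (p : (W : Type) × SimpleGraph W) : IsIterConnSum t [p] p
  | cons {l : List ((W : Type) × SimpleGraph W)} {p q r : (W : Type) × SimpleGraph W} :
      IsIterConnSum t l p → IsConnSum t p.2 q.2 r.2 → IsIterConnSum t (l ++ [q]) r

/-- An abstract simplicial complex on the finite vertex set `V`. -/
structure SimpComplex (V : Type) [DecidableEq V] where
  faces : Finset (Finset V)
  singleton_mem : ∀ v : V, {v} ∈ faces
  down_closed : ∀ F ∈ faces, ∀ F', F' ⊆ F → F' ∈ faces

/-- The 1-skeleton of a simplicial complex. -/
def SimpComplex.skeleton {V : Type} [DecidableEq V] (Δ : SimpComplex V) : SimpleGraph V where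
  Adj x y := x ≠ y ∧ ({x, y} : Finset V) ∈ Δ.faces
  symm := by
    constructor
    intro x y h
    exact ⟨h.1.symm, by rw [Finset.pair_comm]; exact h.2⟩
  loopless := by constructor; intro x h; exact h.1 rfl

/-- The graph of the restricted complex `Δ_W = {F ∩ W : F ∈ Δ}` on the vertex set `W`:
two vertices are connected iff they form a face of `Δ_W`. -/
def SimpComplex.restrictGraph {V : Type} [DecidableEq V] (Δ : SimpComplex V) (W : Finset V) :
    SimpleGraph (W : Set V) :=
  SimpleGraph.fromRel (fun x y => ∃ F ∈ Δ.faces, F ∩ W = {(x : V), (y : V)})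

/-- The `k`-th special graded Betti number of a simplicial complex. -/
noncomputable def complexB {V : Type} [Fintype V] [DecidableEq V] (k : ℕ)
    (Δ : SimpComplex V) : ℤ :=
  ∑ W ∈ Finset.powersetCard k (Finset.univ : Finset V),
    ((Nat.card (Δ.restrictGraph W).ConnectedComponent : ℤ) - 1)

/-- `Δ` is a `t`-connected sum of the simplicial complexes `Δ₁` and `Δ₂`. -/
def IsConnSumC {V₁ V₂ V : Type} [DecidableEq V₁] [DecidableEq V₂] [DecidableEq V] (t : ℕ)
    (Δ₁ : SimpComplex V₁) (Δ₂ : SimpComplex V₂) (Δ : SimpComplex V) : Prop :=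
  ∃ (f₁ : V₁ ↪ V) (f₂ : V₂ ↪ V) (F₁ : Finset V₁) (F₂ : Finset V₂),
    F₁.card = t ∧ F₂.card = t ∧ F₁ ∈ Δ₁.faces ∧ F₂ ∈ Δ₂.faces ∧
    (∀ F ∈ Δ₁.faces, F₁ ⊆ F → F = F₁) ∧
    (∀ F ∈ Δ₂.faces, F₂ ⊆ F → F = F₂) ∧
    Set.range f₁ ∪ Set.range f₂ = Set.univ ∧
    Set.range f₁ ∩ Set.range f₂ = ↑(F₁.image ⇑f₁) ∧
    F₁.image ⇑f₁ = F₂.image ⇑f₂ ∧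
    Δ.faces = (Δ₁.faces.image (Finset.image ⇑f₁) ∪ Δ₂.faces.image (Finset.image ⇑f₂))
      \ {F₁.image ⇑f₁}

namespace Finset

variable {α : Type*} [Fintype α] [DecidableEq α]

theorem sum_powersetCard_inter {R : Type*} [CommSemiring R] (S : Finset α) (k : ℕ)
    (g : Finset α → R) :
    ∑ W ∈ powersetCard k univ, g (W ∩ S) =
      ∑ i ∈ range (k + 1), (∑ T ∈ powersetCard i S, g T) * (#Sᶜ).choose (k - i) := by
  have hsplit : ∑ W ∈ powersetCard k univ, g (W ∩ S) =
      ∑ x ∈ (range (k + 1)).sigma (fun i => powersetCard i S ×ˢ powersetCard (k - i) Sᶜ),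
        g x.2.1 := by
    refine sum_nbij' (fun W => ⟨#(W ∩ S), W ∩ S, W \ S⟩) (fun x => x.2.1 ∪ x.2.2)
      ?_ ?_ ?_ ?_ (fun _ _ => rfl)
    · intro W hW
      rw [mem_powersetCard] at hW
      have := card_inter_add_card_sdiff W S
      rw [mem_sigma, mem_range, mem_product, mem_powersetCard, mem_powersetCard]
      dsimp only
      exact ⟨by omega, ⟨inter_subset_right, rfl⟩,
        ⟨sdiff_eq_inter_compl W S ▸ inter_subset_right, by omega⟩⟩
    · rintro ⟨i, T, U⟩ hx
      simp only [mem_sigma, mem_range, mem_product, mem_powersetCard] at hx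
      obtain ⟨hi, ⟨hTS, rfl⟩, hUS, hU⟩ := hx
      have hTU : Disjoint T U :=
        disjoint_of_subset_right hUS (disjoint_compl_right_iff.2 hTS)
      rw [mem_powersetCard, card_union_of_disjoint hTU]
      exact ⟨subset_univ _, by omega⟩
    · intro W _
      exact sup_inf_sdiff W S
    · rintro ⟨i, T, U⟩ hx
      simp only [mem_sigma, mem_range, mem_product, mem_powersetCard] at hx
      obtain ⟨hi, ⟨hTS, rfl⟩, hUS, hU⟩ := hx
      have hUS' : Disjoint U S := subset_compl_iff_disjoint_right.1 hUS
      have hT : (T ∪ U) ∩ S = T := by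
        rw [union_inter_distrib_right, inter_eq_left.2 hTS, disjoint_iff_inter_eq_empty.1 hUS',
          union_empty]
      have hU : (T ∪ U) \ S = U := by
        rw [union_sdiff_distrib, sdiff_eq_empty_iff_subset.2 hTS, empty_union,
          sdiff_eq_self_of_disjoint hUS']
      simp only [hT, hU]
  rw [hsplit, sum_sigma]
  refine sum_congr rfl fun i _ => ?_
  rw [sum_product, sum_mul]
  simp only [sum_const, card_powersetCard, nsmul_eq_mul, mul_comm]

theorem sum_powersetCard_ite_inter_nonempty (K : Finset α) (k : ℕ) :
    ∑ W ∈ powersetCard k (univ : Finset α), (if (W ∩ K).Nonempty then 1 else 0 : ℤ) =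
      (Fintype.card α).choose k - (Fintype.card α - #K).choose k := by
  have hdisj :
      {W ∈ powersetCard k (univ : Finset α) | ¬ (W ∩ K).Nonempty} = powersetCard k Kᶜ := by
    ext W
    simp [not_nonempty_iff_eq_empty, ← disjoint_iff_inter_eq_empty, subset_compl_iff_disjoint_right,
      and_comm]
  have hcount := card_filter_add_card_filter_not (s := powersetCard k (univ : Finset α))
    (p := fun W => (W ∩ K).Nonempty)
  rw [hdisj, card_powersetCard, card_powersetCard, card_univ, card_compl] at hcount
  rw [sum_boole, ← hcount]
  push_cast
  ring

end Finset

theorem Function.Embedding.card_add_card_range_inter_range {α β γ : Type*} [Finite γ]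
    (f : α ↪ γ) (g : β ↪ γ) (h : Set.range f ∪ Set.range g = Set.univ) :
    Nat.card γ + Nat.card ↥(Set.range f ∩ Set.range g) = Nat.card α + Nat.card β := by
  rw [Nat.card_coe_set_eq, ← Set.ncard_univ, ← h, Set.ncard_union_add_ncard_inter,
    Set.ncard_range_of_injective f.injective, Set.ncard_range_of_injective g.injective]

namespace SimpleGraph

variable {V : Type*} {G : SimpleGraph V} {s s₁ s₂ : Set V}

theorem reachable_induce_of_mem_inter (hK : G.IsClique (s₁ ∩ s₂)) {a b : V}
    (ha : a ∈ s₁ ∩ s₂) (hb : b ∈ s₁ ∩ s₂) :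
    (G.induce s₁).Reachable ⟨a, ha.1⟩ ⟨b, hb.1⟩ := by
  obtain rfl | hab := eq_or_ne a b
  · rfl
  · exact Adj.reachable (hK ha hb hab)

/-- The second conjunct strengthens the induction: a walk can enter `s₁` from `s₂ \ s₁` only
through the clique `s₁ ∩ s₂`. -/
theorem Walk.reachable_induce_of_induce_subset_union
    (hsep : ∀ a ∈ s₁ \ s₂, ∀ b ∈ s₂ \ s₁, ¬ G.Adj a b) (hK : G.IsClique (s₁ ∩ s₂))
    (hs : s ⊆ s₁ ∪ s₂) {u y : s} (w : (G.induce s).Walk u y) (hy : (y : V) ∈ s₁) :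
    (∀ hu : (u : V) ∈ s₁, (G.induce s₁).Reachable ⟨u, hu⟩ ⟨y, hy⟩) ∧
    ((u : V) ∉ s₁ → ∃ c, ∃ hc : c ∈ s₁ ∩ s₂, (G.induce s₁).Reachable ⟨c, hc.1⟩ ⟨y, hy⟩) := by
  induction w with
  | nil => exact ⟨fun _ => .rfl, fun hu => (hu hy).elim⟩
  | @cons u b _ hub _ ih =>
    obtain ⟨ihb₁, ihb₂⟩ := ih hy
    have hub : G.Adj u b := hub
    refine ⟨fun hu => ?_, fun hu => ?_⟩
    · by_cases hb : (b : V) ∈ s₁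
      · exact (Adj.reachable (G := G.induce s₁) (u := ⟨u, hu⟩) (v := ⟨b, hb⟩) hub).trans (ihb₁ hb)
      obtain ⟨c, hc, hcy⟩ := ihb₂ hb
      have hb₂ : (b : V) ∈ s₂ := (hs b.2).resolve_left hb
      have hu₂ : (u : V) ∈ s₂ := by
        by_contra hu₂
        exact hsep u ⟨hu, hu₂⟩ b ⟨hb₂, hb⟩ hub
      exact (reachable_induce_of_mem_inter hK ⟨hu, hu₂⟩ hc).trans hcy
    · by_cases hb : (b : V) ∈ s₁
      · have hu₂ : (u : V) ∈ s₂ := (hs u.2).resolve_left hu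
        have hb₂ : (b : V) ∈ s₂ := by
          by_contra hb₂
          exact hsep b ⟨hb, hb₂⟩ u ⟨hu₂, hu⟩ hub.symm
        exact ⟨b, ⟨hb, hb₂⟩, ihb₁ hb⟩
      · exact ihb₂ hb

theorem map_induceHomOfLE_injective_of_isClique_inter
    (hsep : ∀ a ∈ s₁ \ s₂, ∀ b ∈ s₂ \ s₁, ¬ G.Adj a b) (hK : G.IsClique (s₁ ∩ s₂))
    (h₁ : s₁ ⊆ s) (hs : s ⊆ s₁ ∪ s₂) :
    Function.Injective (ConnectedComponent.map (G.induceHomOfLE h₁).toHom) := by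
  intro C C'
  induction C using ConnectedComponent.ind with | h x => ?_
  induction C' using ConnectedComponent.ind with | h x' => ?_
  simp only [ConnectedComponent.map_mk, ConnectedComponent.eq]
  rintro ⟨w⟩
  exact (w.reachable_induce_of_induce_subset_union hsep hK hs x'.2).1 x.2

theorem exists_mem_inter_reachable_of_reachable_induce_union
    (hsep : ∀ a ∈ s₁ \ s₂, ∀ b ∈ s₂ \ s₁, ¬ G.Adj a b) (hK : G.IsClique (s₁ ∩ s₂))
    {x z : ↥(s₁ ∪ s₂)} (hx : (x : V) ∈ s₁) (hz : (z : V) ∈ s₂)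
    (h : (G.induce (s₁ ∪ s₂)).Reachable z x) :
    ∃ c, ∃ hc : c ∈ s₁ ∩ s₂, (G.induce s₁).Reachable ⟨c, hc.1⟩ ⟨x, hx⟩ := by
  obtain ⟨w⟩ := h
  have hw := w.reachable_induce_of_induce_subset_union hsep hK subset_rfl hx
  by_cases hz₁ : (z : V) ∈ s₁
  · exact ⟨z, ⟨hz₁, hz⟩, hw.1 hz₁⟩
  · exact hw.2 hz₁

open scoped Classical in
theorem ncard_range_map_inter_range_map_of_isClique_inter
    (hsep : ∀ a ∈ s₁ \ s₂, ∀ b ∈ s₂ \ s₁, ¬ G.Adj a b) (hK : G.IsClique (s₁ ∩ s₂)) :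
    (Set.range (ConnectedComponent.map (G.induceHomOfLE (s := s₁) Set.subset_union_left).toHom) ∩
      Set.range (ConnectedComponent.map (G.induceHomOfLE (s := s₂) Set.subset_union_right).toHom)
      ).ncard = if (s₁ ∩ s₂).Nonempty then 1 else 0 := by
  set ι₁ := ConnectedComponent.map (G.induceHomOfLE (s := s₁) Set.subset_union_left).toHom
  set ι₂ := ConnectedComponent.map (G.induceHomOfLE (s := s₂) Set.subset_union_right).toHom
  set mk := (G.induce (s₁ ∪ s₂)).connectedComponentMk
  have hmeet : ∀ D, D ∈ Set.range ι₁ ∩ Set.range ι₂ ↔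
      ∃ c, ∃ hc : c ∈ s₁ ∩ s₂, D = mk ⟨c, .inl hc.1⟩ := by
    intro D
    constructor
    · rintro ⟨⟨C, rfl⟩, ⟨C', hC'⟩⟩
      induction C using ConnectedComponent.ind with | h x => ?_
      induction C' using ConnectedComponent.ind with | h z => ?_
      obtain ⟨c, hc, hcx⟩ := exists_mem_inter_reachable_of_reachable_induce_union hsep hK
        (x := ⟨x, .inl x.2⟩) (z := ⟨z, .inr z.2⟩) x.2 z.2 (ConnectedComponent.eq.mp hC')
      exact ⟨c, hc, ConnectedComponent.sound (hcx.map (G.induceHomOfLE _).toHom).symm⟩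
    · rintro ⟨c, hc, rfl⟩
      exact ⟨⟨_, ConnectedComponent.map_mk _ (⟨c, hc.1⟩ : s₁)⟩,
        ⟨_, ConnectedComponent.map_mk _ (⟨c, hc.2⟩ : s₂)⟩⟩
  split_ifs with hne
  · obtain ⟨c₀, hc₀⟩ := hne
    rw [Set.ncard_eq_one]
    refine ⟨mk ⟨c₀, .inl hc₀.1⟩, Set.ext fun D => (hmeet D).trans ⟨?_, fun h => ⟨c₀, hc₀, h⟩⟩⟩
    rintro ⟨c, hc, rfl⟩
    exact ConnectedComponent.sound
      ((reachable_induce_of_mem_inter hK hc hc₀).map (G.induceHomOfLE Set.subset_union_left).toHom)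
  · rw [Set.eq_empty_of_forall_notMem fun D hD => hne <| let ⟨c, hc, _⟩ := (hmeet D).1 hD; ⟨c, hc⟩,
      Set.ncard_empty]

open scoped Classical in
theorem card_connectedComponent_induce_union [Finite V]
    (hsep : ∀ a ∈ s₁ \ s₂, ∀ b ∈ s₂ \ s₁, ¬ G.Adj a b) (hK : G.IsClique (s₁ ∩ s₂)) :
    Nat.card (G.induce (s₁ ∪ s₂)).ConnectedComponent + (if (s₁ ∩ s₂).Nonempty then 1 else 0) =
      Nat.card (G.induce s₁).ConnectedComponent + Nat.card (G.induce s₂).ConnectedComponent := by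
  set ι₁ := ConnectedComponent.map (G.induceHomOfLE (s := s₁) Set.subset_union_left).toHom
  set ι₂ := ConnectedComponent.map (G.induceHomOfLE (s := s₂) Set.subset_union_right).toHom
  have hι₁ : Function.Injective ι₁ :=
    map_induceHomOfLE_injective_of_isClique_inter hsep hK _ subset_rfl
  have hι₂ : Function.Injective ι₂ :=
    map_induceHomOfLE_injective_of_isClique_inter (fun a ha b hb h => hsep b hb a ha h.symm)
      (by rwa [Set.inter_comm]) _ (Set.union_comm _ _).subset
  have hcover : Set.range ι₁ ∪ Set.range ι₂ = Set.univ := by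
    refine Set.eq_univ_of_forall fun D => ?_
    induction D using ConnectedComponent.ind with | h v => ?_
    rcases v.2 with hv | hv
    exacts [.inl ⟨_, ConnectedComponent.map_mk _ (⟨v, hv⟩ : s₁)⟩,
      .inr ⟨_, ConnectedComponent.map_mk _ (⟨v, hv⟩ : s₂)⟩]
  rw [← ncard_range_map_inter_range_map_of_isClique_inter hsep hK,
    ← Nat.card_range_of_injective hι₁, ← Nat.card_range_of_injective hι₂, Nat.card_coe_set_eq,
    Nat.card_coe_set_eq, ← Set.ncard_union_add_ncard_inter, hcover, Set.ncard_univ]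

theorem Embedding.card_connectedComponent_induce_image {W : Type*} {H : SimpleGraph W}
    (φ : G ↪g H) (s : Set V) :
    Nat.card (H.induce (φ '' s)).ConnectedComponent = Nat.card (G.induce s).ConnectedComponent :=
  Nat.card_congr
    (Iso.connectedComponentEquiv ⟨Equiv.Set.image φ s φ.injective, φ.map_adj_iff⟩).symm

end SimpleGraph

theorem graphC_eq_sum_powersetCard_map {V₁ V : Type} [Fintype V₁] [DecidableEq V₁]
    [DecidableEq V] {G₁ : SimpleGraph V₁} {G : SimpleGraph V} (φ : G₁ ↪g G) (i : ℕ) :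
    graphC i G₁ = ∑ T ∈ powersetCard i (univ.map φ.toEmbedding),
      Nat.card (G.induce (T : Set V)).ConnectedComponent := by
  rw [powersetCard_map, sum_map, graphC]
  refine sum_congr rfl fun T _ => ?_
  rw [RelEmbedding.coe_toEmbedding, mapEmbedding_apply, coe_map,
    RelEmbedding.coe_toEmbedding, φ.card_connectedComponent_induce_image]

theorem graphC_eq_of_isClique_inter {V : Type} [Fintype V] [DecidableEq V] {G : SimpleGraph V}
    {A B : Finset V} (hAB : A ∪ B = univ) (hsep : ∀ a ∈ A \ B, ∀ b ∈ B \ A, ¬ G.Adj a b)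
    (hK : G.IsClique (↑(A ∩ B) : Set V)) (k : ℕ) :
    (graphC k G : ℤ) =
      ∑ i ∈ range (k + 1),
        (((∑ T ∈ powersetCard i A, Nat.card (G.induce (T : Set V)).ConnectedComponent : ℕ) : ℤ) *
            (#Aᶜ).choose (k - i) +
          ((∑ T ∈ powersetCard i B, Nat.card (G.induce (T : Set V)).ConnectedComponent : ℕ) : ℤ) *
            (#Bᶜ).choose (k - i))
      - (Fintype.card V).choose k + (Fintype.card V - #(A ∩ B)).choose k := by
  have hW : ∀ W : Finset V, (Nat.card (G.induce (W : Set V)).ConnectedComponent : ℤ) =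
      Nat.card (G.induce (↑(W ∩ A) : Set V)).ConnectedComponent +
        Nat.card (G.induce (↑(W ∩ B) : Set V)).ConnectedComponent -
        if (W ∩ (A ∩ B)).Nonempty then 1 else 0 := by
    intro W
    have hsplit : (W : Set V) = ↑(W ∩ A) ∪ ↑(W ∩ B) := by
      rw [← coe_union, ← inter_union_distrib_left, hAB, inter_univ]
    have hmeet : (↑(W ∩ A) ∩ ↑(W ∩ B) : Set V) = ↑(W ∩ (A ∩ B)) := by
      rw [← coe_inter, ← inter_inter_distrib_left]
    have hsub : ∀ {X Y : Finset V}, (↑(W ∩ X) : Set V) \ ↑(W ∩ Y) ⊆ ↑(X \ Y) := by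
      intro X Y a
      simp only [coe_inter, coe_sdiff, Set.mem_sdiff, Set.mem_inter_iff, mem_coe]
      tauto
    have hglue := SimpleGraph.card_connectedComponent_induce_union (G := G)
      (s₁ := ↑(W ∩ A)) (s₂ := ↑(W ∩ B)) (fun a ha b hb => hsep a (hsub ha) b (hsub hb))
      (hK.subset (by rw [hmeet]; exact coe_subset.2 inter_subset_right))
    simp only [hmeet, coe_nonempty] at hglue
    rw [hsplit]
    split_ifs at hglue ⊢ <;> omega
  calc (graphC k G : ℤ)
      = ∑ W ∈ powersetCard k univ,
          ((Nat.card (G.induce (↑(W ∩ A) : Set V)).ConnectedComponent : ℤ) +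
            Nat.card (G.induce (↑(W ∩ B) : Set V)).ConnectedComponent -
            if (W ∩ (A ∩ B)).Nonempty then 1 else 0) := by
        rw [graphC, Nat.cast_sum]
        exact sum_congr rfl fun W _ => hW W
    _ = _ := by
        let c : Finset V → ℤ := fun T => Nat.card (G.induce (T : Set V)).ConnectedComponent
        rw [sum_sub_distrib, sum_add_distrib, sum_powersetCard_inter A k c,
          sum_powersetCard_inter B k c, sum_powersetCard_ite_inter_nonempty, ← sum_add_distrib]
        push_cast
        ring

theorem adj_apply_iff_of_adj_iff_or {V₁ V₂ V : Type} {G₁ : SimpleGraph V₁}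
    {G₂ : SimpleGraph V₂} {G : SimpleGraph V} {f₁ : V₁ ↪ V} {f₂ : V₂ ↪ V} {F₁ : Set V₁}
    (hF₁ : ∀ x ∈ F₁, ∀ y ∈ F₁, x ≠ y → G₁.Adj x y)
    (hinter : Set.range f₁ ∩ Set.range f₂ = f₁ '' F₁)
    (hadj : ∀ a b, G.Adj a b ↔
      ((∃ x y, G₁.Adj x y ∧ f₁ x = a ∧ f₁ y = b) ∨ (∃ x y, G₂.Adj x y ∧ f₂ x = a ∧ f₂ y = b)))
    (x y : V₁) :
    G.Adj (f₁ x) (f₁ y) ↔ G₁.Adj x y := by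
  refine ⟨fun h => ?_, fun h => (hadj _ _).2 (.inl ⟨x, y, h, rfl, rfl⟩)⟩
  rcases (hadj _ _).1 h with ⟨x', y', h', hx, hy⟩ | ⟨x', y', -, hx, hy⟩
  · rwa [← f₁.injective hx, ← f₁.injective hy]
  · have hF : ∀ z, f₁ z ∈ Set.range f₂ → z ∈ F₁ := fun z hz =>
      f₁.injective.mem_set_image.1 (hinter ▸ ⟨⟨z, rfl⟩, hz⟩)
    exact hF₁ x (hF x ⟨x', hx⟩) y (hF y ⟨y', hy⟩) (fun e => h.ne (congrArg f₁ e))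

theorem IsConnSum.exists_embeddings {V₁ V₂ V : Type} {t : ℕ} {G₁ : SimpleGraph V₁}
    {G₂ : SimpleGraph V₂} {G : SimpleGraph V} (h : IsConnSum t G₁ G₂ G) :
    ∃ (φ₁ : G₁ ↪g G) (φ₂ : G₂ ↪g G), Set.range φ₁ ∪ Set.range φ₂ = Set.univ ∧
      Nat.card ↥(Set.range φ₁ ∩ Set.range φ₂) = t ∧
      G.IsClique (Set.range φ₁ ∩ Set.range φ₂) ∧
      ∀ a ∈ Set.range φ₁ \ Set.range φ₂, ∀ b ∈ Set.range φ₂ \ Set.range φ₁, ¬ G.Adj a b := by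
  obtain ⟨f₁, f₂, F₁, F₂, hF₁, -, hK₁, hK₂, hcover, hinter, hF, hadj⟩ := h
  have hadj₁ := adj_apply_iff_of_adj_iff_or hK₁ hinter hadj
  have hadj₂ := adj_apply_iff_of_adj_iff_or hK₂ (by rw [Set.inter_comm, hinter, hF])
    fun a b => (hadj a b).trans or_comm
  refine ⟨⟨f₁, hadj₁ _ _⟩, ⟨f₂, hadj₂ _ _⟩, hcover, ?_, ?_, ?_⟩
  · change Nat.card ↥(Set.range f₁ ∩ Set.range f₂) = t
    rw [hinter, Nat.card_image_of_injective f₁.injective, hF₁]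
  · change G.IsClique (Set.range f₁ ∩ Set.range f₂)
    rw [hinter]
    rintro _ ⟨x, hx, rfl⟩ _ ⟨y, hy, rfl⟩ hne
    exact (hadj₁ x y).2 (hK₁ x hx y hy (ne_of_apply_ne _ hne))
  · rintro a ⟨-, ha₂⟩ b ⟨-, hb₁⟩ hab
    rcases (hadj a b).1 hab with ⟨x, y, -, rfl, rfl⟩ | ⟨x, y, -, rfl, rfl⟩
    exacts [hb₁ ⟨y, rfl⟩, ha₂ ⟨x, rfl⟩]

theorem graphC_eq_of_embeddings {V₁ V₂ V : Type} [Fintype V₁] [DecidableEq V₁] [Fintype V₂]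
    [DecidableEq V₂] [Fintype V] [DecidableEq V] {G₁ : SimpleGraph V₁} {G₂ : SimpleGraph V₂}
    {G : SimpleGraph V} (φ₁ : G₁ ↪g G) (φ₂ : G₂ ↪g G)
    (hcover : Set.range φ₁ ∪ Set.range φ₂ = Set.univ)
    (hK : G.IsClique (Set.range φ₁ ∩ Set.range φ₂))
    (hsep : ∀ a ∈ Set.range φ₁ \ Set.range φ₂, ∀ b ∈ Set.range φ₂ \ Set.range φ₁, ¬ G.Adj a b)
    (k : ℕ) :
    (graphC k G : ℤ) =
      ∑ i ∈ range (k + 1),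
        ((graphC i G₁ : ℤ) * (Fintype.card V - Fintype.card V₁).choose (k - i) +
          (graphC i G₂ : ℤ) * (Fintype.card V - Fintype.card V₂).choose (k - i))
      - (Fintype.card V).choose k +
        (Fintype.card V - Nat.card ↥(Set.range φ₁ ∩ Set.range φ₂)).choose k := by
  have hA : (↑(univ.map φ₁.toEmbedding) : Set V) = Set.range φ₁ := by simp
  have hB : (↑(univ.map φ₂.toEmbedding) : Set V) = Set.range φ₂ := by simp
  have hAB : univ.map φ₁.toEmbedding ∪ univ.map φ₂.toEmbedding = univ :=
    coe_injective (by rw [coe_union, hA, hB, hcover, coe_univ])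
  have hsep' : ∀ a ∈ univ.map φ₁.toEmbedding \ univ.map φ₂.toEmbedding,
      ∀ b ∈ univ.map φ₂.toEmbedding \ univ.map φ₁.toEmbedding, ¬ G.Adj a b := by
    intro a ha b hb
    rw [← mem_coe, coe_sdiff, hA, hB] at ha hb
    exact hsep a ha b hb
  rw [graphC_eq_of_isClique_inter hAB hsep' (by rwa [coe_inter, hA, hB]), card_compl, card_compl,
    card_map, card_map, card_univ, card_univ, ← Set.ncard_coe_finset, coe_inter, hA, hB,
    ← Nat.card_coe_set_eq]
  simp only [← graphC_eq_sum_powersetCard_map]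

/-- the formula for `c_k` of a `t`-connected sum of two graphs. -/
theorem ck_connSum {V₁ V₂ V : Type} [Fintype V₁] [DecidableEq V₁] [Fintype V₂] [DecidableEq V₂]
    [Fintype V] [DecidableEq V] (t k n₁ n₂ : ℕ)
    (G₁ : SimpleGraph V₁) (G₂ : SimpleGraph V₂) (G : SimpleGraph V)
    (hn₁ : Fintype.card V₁ = n₁) (hn₂ : Fintype.card V₂ = n₂)
    (h : IsConnSum t G₁ G₂ G) :
    (graphC k G : ℤ) =
      (∑ i ∈ Finset.range (k + 1),
        ((graphC i G₁ : ℤ) * ((n₂ - t).choose (k - i)) +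
         (graphC i G₂ : ℤ) * ((n₁ - t).choose (k - i))))
      - ((n₁ + n₂ - t).choose k) + ((n₁ + n₂ - 2 * t).choose k) := by
  obtain ⟨φ₁, φ₂, hcover, hcard, hK, hsep⟩ := h.exists_embeddings
  have hV := φ₁.toEmbedding.card_add_card_range_inter_range φ₂.toEmbedding hcover
  rw [RelEmbedding.coe_toEmbedding, RelEmbedding.coe_toEmbedding, hcard] at hV
  simp only [Nat.card_eq_fintype_card, hn₁, hn₂] at hV
  have hle₁ := hn₁ ▸ Fintype.card_le_of_embedding φ₁.toEmbedding
  have hle₂ := hn₂ ▸ Fintype.card_le_of_embedding φ₂.toEmbedding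
  rw [graphC_eq_of_embeddings φ₁ φ₂ hcover hK hsep, hcard, hn₁, hn₂,
    show Fintype.card V - n₁ = n₂ - t by omega, show Fintype.card V - n₂ = n₁ - t by omega,
    show Fintype.card V = n₁ + n₂ - t by omega, show n₁ + n₂ - t - t = n₁ + n₂ - 2 * t by omega]
end

section
/- If G and H are both t-connected sums of the same sequence of graphs G₁, G₂, …, G_n (possibly with different choices of gluing sets and relabelings), then b_k(G) = b_k(H) for all k. -/
open Finset

/-!
Gluing two graphs along a common clique `K` is additive on component counts: for every vertex
set `W`, `c(G[W]) + [W meets K] = c(G₁[W ∩ V₁]) + c(G₂[W ∩ V₂])`, since `K ∩ W` lies in a single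
component on each side, these two components merge, and every other component survives.
Summing over the `k`-subsets `W`, and counting the ways to extend a subset of `Vᵢ` to a `k`-subset
of `V`, expresses `c_k(G)` through `t`, `|V₁|`, `|V₂|` and the sequences `c_m(G₁)`, `c_m(G₂)`.
As `b_k = c_k - C(n, k)` and `n = c_1`, induction along the sequence shows that `c_k`, hence `b_k`,
of an iterated `t`-connected sum depends only on the summands.
-/

open Function

theorem Finset.card_filter_preimage_eq {α β : Type*} [Fintype α] [DecidableEq α] [Fintype β]
    [DecidableEq β] (f : α ↪ β) {k : ℕ} {U : Finset α} (hU : #U ≤ k) :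
    #{W ∈ powersetCard k univ | W.preimage f f.injective.injOn = U} =
      (Fintype.card β - Fintype.card α).choose (k - #U) := by
  set R := univ.map f
  have hpre (W : Finset β) : W.preimage f f.injective.injOn = U ↔ W ∩ R = U.map f := by
    constructor
    · rintro rfl
      ext b
      simp only [mem_inter, mem_map, mem_preimage, mem_univ, true_and, R]
      grind
    · intro hW
      rw [← preimage_map f U, ← hW]
      ext x
      simp [R]
  have hR : #Rᶜ = Fintype.card β - Fintype.card α := by rw [card_compl, card_map, card_univ]
  rw [← hR, ← card_powersetCard]
  have hUR : U.map f ⊆ R := map_subset_map.2 (subset_univ U)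
  refine card_nbij' (· \ R) (U.map f ∪ ·) ?_ ?_ ?_ ?_
  · intro W hW
    simp only [mem_coe, mem_filter, mem_powersetCard, hpre] at hW ⊢
    obtain ⟨⟨-, hWk⟩, hWU⟩ := hW
    refine ⟨fun b hb => mem_compl.2 (mem_sdiff.1 hb).2, ?_⟩
    have := card_sdiff_add_card_inter W R
    rw [hWU, card_map] at this
    omega
  · intro B hB
    simp only [mem_coe, mem_filter, mem_powersetCard, hpre] at hB ⊢
    obtain ⟨hBR, hBk⟩ := hB
    rw [subset_compl_iff_disjoint_right] at hBR
    have hdisj : Disjoint (U.map f) B := disjoint_of_subset_left hUR hBR.symm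
    refine ⟨⟨subset_univ _, ?_⟩, ?_⟩
    · rw [card_union_of_disjoint hdisj, card_map]
      omega
    · rw [union_inter_distrib_right, inter_eq_left.2 hUR, disjoint_iff_inter_eq_empty.1 hBR,
        union_empty]
  · intro W hW
    simp only [mem_coe, mem_filter, hpre] at hW
    rw [← hW.2]
    ext b
    simp only [mem_union, mem_inter, mem_sdiff]
    tauto
  · intro B hB
    simp only [mem_coe, mem_powersetCard, subset_compl_iff_disjoint_right] at hB
    change (U.map f ∪ B) \ R = B
    rw [union_sdiff_distrib, sdiff_eq_empty_iff_subset.2 hUR, empty_union,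
      sdiff_eq_self_of_disjoint hB.1]

theorem Finset.sum_powersetCard_preimage {α β M : Type*} [Fintype α] [DecidableEq α]
    [Fintype β] [DecidableEq β] [AddCommMonoid M] (f : α ↪ β) (g : Finset α → M) (k : ℕ) :
    ∑ W ∈ powersetCard k univ, g (W.preimage f f.injective.injOn) =
      ∑ m ∈ range (k + 1), (Fintype.card β - Fintype.card α).choose (k - m) •
        ∑ U ∈ powersetCard m univ, g U := by
  have hmaps : ∀ W ∈ powersetCard k univ, W.preimage f f.injective.injOn ∈
      (range (k + 1)).biUnion (powersetCard · univ) := by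
    intro W hW
    have : #(W.preimage f f.injective.injOn) ≤ k := by
      rw [← (mem_powersetCard.1 hW).2, ← card_map f]
      exact card_le_card (map_subset_iff_subset_preimage.2 subset_rfl)
    exact mem_biUnion.2
      ⟨_, mem_range.2 (Nat.lt_succ_of_le this), mem_powersetCard.2 ⟨subset_univ _, rfl⟩⟩
  rw [← sum_fiberwise_of_maps_to hmaps,
    sum_biUnion ((pairwise_disjoint_powersetCard univ).set_pairwise _)]
  refine sum_congr rfl fun m hm => ?_
  rw [smul_sum]
  refine sum_congr rfl fun U hU => ?_
  rw [mem_powersetCard] at hU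
  rw [sum_congr rfl fun W hW => congrArg g (mem_filter.1 hW).2, sum_const,
    card_filter_preimage_eq f (hU.2 ▸ Nat.lt_succ_iff.1 (mem_range.1 hm)), hU.2]

theorem Finset.card_powersetCard_filter_disjoint {β : Type*} [Fintype β] [DecidableEq β]
    (K : Finset β) (k : ℕ) :
    #{W ∈ powersetCard k univ | Disjoint W K} = (Fintype.card β - #K).choose k := by
  rw [← card_compl, ← card_powersetCard]
  congr 1
  ext W
  simp [subset_compl_iff_disjoint_right, and_comm]

theorem Nat.card_eq_card_add_ncard_of_leftInverse {α β : Type*} [Finite α] {g : α → β}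
    {ρ : β → α} (h : LeftInverse g ρ) :
    Nat.card α = Nat.card β + {a | ρ (g a) ≠ a}.ncard := by
  have hrange : Set.range ρ = {a | ρ (g a) = a} := by
    ext a
    constructor
    · rintro ⟨b, rfl⟩
      simp [h b]
    · intro ha
      exact ⟨g a, ha⟩
  rw [← Set.ncard_add_ncard_compl (Set.range ρ), Set.ncard_range_of_injective h.injective,
    hrange]
  rfl

namespace SimpleGraph

variable {V V₁ V₂ : Type*}

theorem IsClique.connectedComponentMk_eq {G : SimpleGraph V} {s : Set V} (h : G.IsClique s)
    {x y : V} (hx : x ∈ s) (hy : y ∈ s) :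
    G.connectedComponentMk x = G.connectedComponentMk y := by
  obtain rfl | hxy := eq_or_ne x y
  · rfl
  · exact ConnectedComponent.connectedComponentMk_eq_of_adj (h hx hy hxy)

theorem Walk.apply_eq_of_forall_adj {β : Sort*} {G : SimpleGraph V} {f : V → β}
    (hf : ∀ v w, G.Adj v w → f v = f w) {u v : V} (p : G.Walk u v) : f u = f v := by
  induction p with
  | nil => rfl
  | cons hadj _ ih => exact (hf _ _ hadj).trans ih

structure IsCliqueSum (G₁ : SimpleGraph V₁) (G₂ : SimpleGraph V₂) (G : SimpleGraph V)
    (f₁ : V₁ → V) (f₂ : V₂ → V) : Prop where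
  injective_left : Injective f₁
  injective_right : Injective f₂
  range_union : Set.range f₁ ∪ Set.range f₂ = Set.univ
  eq_sup : G = G₁.map f₁ ⊔ G₂.map f₂
  isClique_left : G₁.IsClique (f₁ ⁻¹' Set.range f₂)
  isClique_right : G₂.IsClique (f₂ ⁻¹' Set.range f₁)

namespace IsCliqueSum

variable {G₁ : SimpleGraph V₁} {G₂ : SimpleGraph V₂} {G : SimpleGraph V} {f₁ : V₁ → V}
  {f₂ : V₂ → V}

theorem adj_iff (h : IsCliqueSum G₁ G₂ G f₁ f₂) {a b : V} : G.Adj a b ↔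
    (∃ x y, G₁.Adj x y ∧ f₁ x = a ∧ f₁ y = b) ∨ ∃ x y, G₂.Adj x y ∧ f₂ x = a ∧ f₂ y = b := by
  rw [h.eq_sup, sup_adj]
  exact or_congr (map_adj ⟨f₁, h.injective_left⟩ G₁ a b) (map_adj ⟨f₂, h.injective_right⟩ G₂ a b)

def homLeft (h : IsCliqueSum G₁ G₂ G f₁ f₂) : G₁ →g G :=
  ⟨f₁, fun hxy => h.adj_iff.2 (.inl ⟨_, _, hxy, rfl, rfl⟩)⟩

def homRight (h : IsCliqueSum G₁ G₂ G f₁ f₂) : G₂ →g G :=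
  ⟨f₂, fun hxy => h.adj_iff.2 (.inr ⟨_, _, hxy, rfl, rfl⟩)⟩

theorem exists_leftInverse (h : IsCliqueSum G₁ G₂ G f₁ f₂)
    (σ : G₂.ConnectedComponent → G₁.ConnectedComponent ⊕ G₂.ConnectedComponent)
    (hσ_glue : ∀ x y, f₁ x = f₂ y →
      σ (G₂.connectedComponentMk y) = .inl (G₁.connectedComponentMk x))
    (hσ_map : ∀ c, Sum.elim (·.map h.homLeft) (·.map h.homRight) (σ c) = c.map h.homRight) :
    ∃ ρ : G.ConnectedComponent → G₁.ConnectedComponent ⊕ G₂.ConnectedComponent,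
      LeftInverse (Sum.elim (·.map h.homLeft) (·.map h.homRight)) ρ ∧
      (∀ a, ρ (a.map h.homLeft) = .inl a) ∧ ∀ c, ρ (c.map h.homRight) = σ c := by
  let e : V₁ ⊕ V₂ → V := Sum.elim f₁ f₂
  have he : Surjective e := Set.range_eq_univ.1 (by rw [Set.Sum.elim_range, h.range_union])
  let ψ : V₁ ⊕ V₂ → G₁.ConnectedComponent ⊕ G₂.ConnectedComponent :=
    Sum.elim (.inl ∘ G₁.connectedComponentMk) (σ ∘ G₂.connectedComponentMk)
  have hψ : ∀ z z', e z = e z' → ψ z = ψ z' := by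
    rintro (x | y) (x' | y') hzz'
    · rw [h.injective_left hzz']
    · exact (hσ_glue x y' hzz').symm
    · exact hσ_glue x' y hzz'.symm
    · rw [h.injective_right hzz']
  let ρ₀ := ψ ∘ surjInv he
  have ρ₀_apply (z : V₁ ⊕ V₂) : ρ₀ (e z) = ψ z := hψ _ _ (surjInv_eq he (e z))
  have ρ₀_left (x : V₁) : ρ₀ (f₁ x) = .inl (G₁.connectedComponentMk x) := ρ₀_apply (.inl x)
  have ρ₀_right (y : V₂) : ρ₀ (f₂ y) = σ (G₂.connectedComponentMk y) := ρ₀_apply (.inr y)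
  have ρ₀_adj (a b : V) (hab : G.Adj a b) : ρ₀ a = ρ₀ b := by
    rcases h.adj_iff.1 hab with ⟨x, y, hxy, rfl, rfl⟩ | ⟨x, y, hxy, rfl, rfl⟩
    · rw [ρ₀_left, ρ₀_left, ConnectedComponent.connectedComponentMk_eq_of_adj hxy]
    · rw [ρ₀_right, ρ₀_right, ConnectedComponent.connectedComponentMk_eq_of_adj hxy]
  refine ⟨ConnectedComponent.lift ρ₀ fun _ _ p _ => p.apply_eq_of_forall_adj ρ₀_adj,
    ConnectedComponent.ind fun v => ?_, ConnectedComponent.ind fun x => ρ₀_left x,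
    ConnectedComponent.ind fun y => ρ₀_right y⟩
  obtain ⟨x | y, rfl⟩ := he v
  · change Sum.elim _ _ (ρ₀ (f₁ x)) = _
    rw [ρ₀_left]
    rfl
  · change Sum.elim _ _ (ρ₀ (f₂ y)) = _
    rw [ρ₀_right, hσ_map]
    rfl

-- `σ` sends each component of `G₂` either to itself or to the component of `G₁` it merges into;
-- the components of `G` are then the components of `G₁` and `G₂` that `σ` does not move.
theorem card_connectedComponent_add_ncard [Finite V₁] [Finite V₂] (h : IsCliqueSum G₁ G₂ G f₁ f₂)
    (σ : G₂.ConnectedComponent → G₁.ConnectedComponent ⊕ G₂.ConnectedComponent)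
    (hσ_glue : ∀ x y, f₁ x = f₂ y →
      σ (G₂.connectedComponentMk y) = .inl (G₁.connectedComponentMk x))
    (hσ_map : ∀ c, Sum.elim (·.map h.homLeft) (·.map h.homRight) (σ c) = c.map h.homRight) :
    Nat.card G₁.ConnectedComponent + Nat.card G₂.ConnectedComponent =
      Nat.card G.ConnectedComponent + {c | σ c ≠ .inr c}.ncard := by
  obtain ⟨ρ, hgρ, hρ_left, hρ_right⟩ := h.exists_leftInverse σ hσ_glue hσ_map
  have hmoved : {a | ρ (Sum.elim (·.map h.homLeft) (·.map h.homRight) a) ≠ a} =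
      .inr '' {c | σ c ≠ .inr c} := by
    ext (a | c)
    · simp [hρ_left]
    · simp [hρ_right, Sum.inr_injective.mem_set_image]
  rw [← Nat.card_sum, Nat.card_eq_card_add_ncard_of_leftInverse hgρ, hmoved,
    Set.ncard_image_of_injective _ Sum.inr_injective]

open Classical in
theorem card_connectedComponent_add [Finite V₁] [Finite V₂] (h : IsCliqueSum G₁ G₂ G f₁ f₂) :
    Nat.card G.ConnectedComponent + (if (Set.range f₁ ∩ Set.range f₂).Nonempty then 1 else 0) =
      Nat.card G₁.ConnectedComponent + Nat.card G₂.ConnectedComponent := by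
  split_ifs with hK
  · obtain ⟨_, ⟨x₀, rfl⟩, y₀, hy₀⟩ := hK
    let σ (c : G₂.ConnectedComponent) : G₁.ConnectedComponent ⊕ G₂.ConnectedComponent :=
      if c = G₂.connectedComponentMk y₀ then .inl (G₁.connectedComponentMk x₀) else .inr c
    have hσ_glue (x : V₁) (y : V₂) (hxy : f₁ x = f₂ y) :
        σ (G₂.connectedComponentMk y) = .inl (G₁.connectedComponentMk x) := by
      rw [h.isClique_right.connectedComponentMk_eq ⟨x, hxy⟩ ⟨x₀, hy₀.symm⟩,
        h.isClique_left.connectedComponentMk_eq ⟨y, hxy.symm⟩ ⟨y₀, hy₀⟩]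
      simp [σ]
    have hσ_map (c : G₂.ConnectedComponent) :
        Sum.elim (·.map h.homLeft) (·.map h.homRight) (σ c) = c.map h.homRight := by
      by_cases hc : c = G₂.connectedComponentMk y₀
      · simp only [σ, hc, if_true, Sum.elim_inl, ConnectedComponent.map_mk]
        exact congrArg G.connectedComponentMk hy₀.symm
      · simp only [σ, if_neg hc, Sum.elim_inr]
    have hmoved : {c | σ c ≠ .inr c} = {G₂.connectedComponentMk y₀} := by
      ext c
      by_cases hc : c = G₂.connectedComponentMk y₀ <;> simp [σ, hc]
    rw [h.card_connectedComponent_add_ncard σ hσ_glue hσ_map, hmoved, Set.ncard_singleton]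
  · have hσ_glue (x : V₁) (y : V₂) (hxy : f₁ x = f₂ y) :
        Sum.inr (G₂.connectedComponentMk y) = .inl (G₁.connectedComponentMk x) :=
      (hK ⟨f₁ x, ⟨x, rfl⟩, y, hxy.symm⟩).elim
    simpa using (h.card_connectedComponent_add_ncard .inr hσ_glue fun _ => rfl).symm

theorem induce (h : IsCliqueSum G₁ G₂ G f₁ f₂) (W : Set V) :
    IsCliqueSum (G₁.induce (f₁ ⁻¹' W)) (G₂.induce (f₂ ⁻¹' W)) (G.induce W)
      (W.restrictPreimage f₁) (W.restrictPreimage f₂) where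
  injective_left := Set.restrictPreimage_injective _ h.injective_left
  injective_right := Set.restrictPreimage_injective _ h.injective_right
  range_union := by
    rw [Set.range_restrictPreimage, Set.range_restrictPreimage, ← Set.preimage_union,
      h.range_union, Set.preimage_univ]
  eq_sup := by
    ext ⟨a, ha⟩ ⟨b, hb⟩
    simp only [comap_adj, Function.Embedding.coe_subtype, h.adj_iff, sup_adj, map_adj',
      Subtype.exists, Set.mem_preimage, Set.restrictPreimage_mk, Subtype.mk.injEq, ne_eq]
    constructor
    · rintro (⟨x, y, hxy, rfl, rfl⟩ | ⟨x, y, hxy, rfl, rfl⟩)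
      · exact .inl ⟨h.injective_left.ne hxy.ne, x, ha, y, hb, hxy, rfl, rfl⟩
      · exact .inr ⟨h.injective_right.ne hxy.ne, x, ha, y, hb, hxy, rfl, rfl⟩
    · rintro (⟨-, x, -, y, -, hxy⟩ | ⟨-, x, -, y, -, hxy⟩)
      exacts [.inl ⟨x, y, hxy⟩, .inr ⟨x, y, hxy⟩]
  isClique_left x hx x' hx' hxx' := by
    rw [Set.range_restrictPreimage] at hx hx'
    exact h.isClique_left hx hx' (Subtype.coe_injective.ne hxx')
  isClique_right y hy y' hy' hyy' := by
    rw [Set.range_restrictPreimage] at hy hy'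
    exact h.isClique_right hy hy' (Subtype.coe_injective.ne hyy')

end IsCliqueSum

end SimpleGraph

open SimpleGraph

theorem graphC_one {V : Type} [Fintype V] [DecidableEq V] (G : SimpleGraph V) :
    graphC 1 G = Fintype.card V := by
  have hW : ∀ W ∈ powersetCard 1 (univ : Finset V),
      Nat.card (G.induce (W : Set V)).ConnectedComponent = 1 := by
    intro W hW
    obtain ⟨v, rfl⟩ := card_eq_one.1 (mem_powersetCard.1 hW).2
    rw [coe_singleton]
    exact Nat.card_unique
  rw [graphC, sum_congr rfl hW, sum_const, card_powersetCard, card_univ, Nat.choose_one_right,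
    smul_eq_mul, mul_one]

theorem graphB_eq_graphC_sub {V : Type} [Fintype V] [DecidableEq V] (k : ℕ) (G : SimpleGraph V) :
    graphB k G = graphC k G - (graphC 1 G).choose k := by
  rw [graphC_one]
  simp only [graphB, graphC, sum_sub_distrib, sum_const, nsmul_eq_mul, mul_one,
    card_powersetCard, card_univ, Nat.cast_sum]

namespace SimpleGraph.IsCliqueSum

variable {V₁ V₂ V : Type} {G₁ : SimpleGraph V₁} {G₂ : SimpleGraph V₂} {G : SimpleGraph V}

theorem card_add_ncard_inter [Finite V] {f₁ : V₁ → V} {f₂ : V₂ → V}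
    (h : IsCliqueSum G₁ G₂ G f₁ f₂) :
    Nat.card V + (Set.range f₁ ∩ Set.range f₂).ncard = Nat.card V₁ + Nat.card V₂ := by
  rw [← Set.ncard_univ, ← h.range_union, Set.ncard_union_add_ncard_inter,
    Set.ncard_range_of_injective h.injective_left, Set.ncard_range_of_injective h.injective_right]

theorem graphC_add_choose [Fintype V₁] [DecidableEq V₁] [Fintype V₂] [DecidableEq V₂]
    [Fintype V] [DecidableEq V] {f₁ : V₁ ↪ V} {f₂ : V₂ ↪ V} (h : IsCliqueSum G₁ G₂ G f₁ f₂)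
    (k : ℕ) :
    graphC k G + (Fintype.card V).choose k =
      ∑ m ∈ range (k + 1), (Fintype.card V - Fintype.card V₁).choose (k - m) * graphC m G₁ +
      ∑ m ∈ range (k + 1), (Fintype.card V - Fintype.card V₂).choose (k - m) * graphC m G₂ +
      (Fintype.card V - (Set.range f₁ ∩ Set.range f₂).ncard).choose k := by
  classical
  rw [Set.ncard_eq_toFinset_card']
  set K := (Set.range f₁ ∩ Set.range f₂).toFinset
  have hW (W : Finset V) :
      Nat.card (G.induce (W : Set V)).ConnectedComponent + (if ¬Disjoint W K then 1 else 0) =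
        Nat.card (G₁.induce (W.preimage f₁ f₁.injective.injOn : Set V₁)).ConnectedComponent +
        Nat.card (G₂.induce (W.preimage f₂ f₂.injective.injOn : Set V₂)).ConnectedComponent := by
    rw [coe_preimage, coe_preimage, ← (h.induce W).card_connectedComponent_add]
    congr 2
    rw [Set.range_restrictPreimage, Set.range_restrictPreimage]
    simp [not_disjoint_iff, K, Set.Nonempty]
  have hsum := sum_congr rfl fun W (_ : W ∈ powersetCard k univ) => hW W
  rw [sum_add_distrib, sum_add_distrib, ← card_filter,
    sum_powersetCard_preimage f₁ (fun U => Nat.card (G₁.induce (U : Set V₁)).ConnectedComponent),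
    sum_powersetCard_preimage f₂ (fun U => Nat.card (G₂.induce (U : Set V₂)).ConnectedComponent)]
    at hsum
  have hsplit := card_filter_add_card_filter_not (s := powersetCard k (univ : Finset V))
    (fun W => Disjoint W K)
  rw [card_powersetCard_filter_disjoint, card_powersetCard, card_univ] at hsplit
  simp only [smul_eq_mul] at hsum
  unfold graphC
  omega

end SimpleGraph.IsCliqueSum

namespace IsConnSum

variable {V₁ V₂ V : Type} {t : ℕ} {G₁ : SimpleGraph V₁} {G₂ : SimpleGraph V₂} {G : SimpleGraph V}

theorem exists_isCliqueSum (h : IsConnSum t G₁ G₂ G) :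
    ∃ (f₁ : V₁ ↪ V) (f₂ : V₂ ↪ V),
      IsCliqueSum G₁ G₂ G f₁ f₂ ∧ (Set.range f₁ ∩ Set.range f₂).ncard = t := by
  obtain ⟨f₁, f₂, F₁, F₂, hF₁, -, hc₁, hc₂, hcov, hinter, himage, hadj⟩ := h
  have hpre₁ : f₁ ⁻¹' Set.range f₂ ⊆ F₁ := fun x hx =>
    f₁.injective.mem_set_image.1 (hinter ▸ ⟨⟨x, rfl⟩, hx⟩)
  have hpre₂ : f₂ ⁻¹' Set.range f₁ ⊆ F₂ := fun y hy =>
    f₂.injective.mem_set_image.1 (himage ▸ hinter ▸ ⟨hy, ⟨y, rfl⟩⟩)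
  refine ⟨f₁, f₂, ⟨f₁.injective, f₂.injective, hcov, ?_, ?_, ?_⟩, ?_⟩
  · ext a b
    rw [hadj, sup_adj, map_adj, map_adj]
  · exact IsClique.subset hpre₁ fun x hx y hy => hc₁ x hx y hy
  · exact IsClique.subset hpre₂ fun x hx y hy => hc₂ x hx y hy
  · rw [hinter, Set.ncard_image_of_injective _ f₁.injective, ← Nat.card_coe_set_eq, hF₁]

theorem finite_left [Finite V] (h : IsConnSum t G₁ G₂ G) : Finite V₁ :=
  let ⟨f₁, _⟩ := h; Finite.of_injective f₁ f₁.injective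

theorem finite_right [Finite V] (h : IsConnSum t G₁ G₂ G) : Finite V₂ :=
  let ⟨_, f₂, _⟩ := h; Finite.of_injective f₂ f₂.injective

theorem graphC_congr {V₁' V₂' V' : Type} [Fintype V₁] [DecidableEq V₁] [Fintype V₂]
    [DecidableEq V₂] [Fintype V] [DecidableEq V] [Fintype V₁'] [DecidableEq V₁'] [Fintype V₂']
    [DecidableEq V₂'] [Fintype V'] [DecidableEq V'] {G₁' : SimpleGraph V₁'}
    {G₂' : SimpleGraph V₂'} {G' : SimpleGraph V'} (h : IsConnSum t G₁ G₂ G)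
    (h' : IsConnSum t G₁' G₂' G') (h₁ : ∀ m, graphC m G₁ = graphC m G₁')
    (h₂ : ∀ m, graphC m G₂ = graphC m G₂') (k : ℕ) :
    graphC k G = graphC k G' := by
  obtain ⟨f₁, f₂, hS, hK⟩ := h.exists_isCliqueSum
  obtain ⟨f₁', f₂', hS', hK'⟩ := h'.exists_isCliqueSum
  have hn₁ : Fintype.card V₁ = Fintype.card V₁' := by rw [← graphC_one, ← graphC_one, h₁]
  have hn₂ : Fintype.card V₂ = Fintype.card V₂' := by rw [← graphC_one, ← graphC_one, h₂]
  have hn : Fintype.card V = Fintype.card V' := by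
    have := hS.card_add_ncard_inter
    have := hS'.card_add_ncard_inter
    simp only [Nat.card_eq_fintype_card] at *
    omega
  have hC := hS.graphC_add_choose k
  have hC' := hS'.graphC_add_choose k
  simp only [hK, hK', hn, hn₁, hn₂, h₁, h₂] at hC hC'
  omega

end IsConnSum

namespace IsIterConnSum

variable {t : ℕ} {l : List ((W : Type) × SimpleGraph W)} {p q r : (W : Type) × SimpleGraph W}

theorem ne_nil (h : IsIterConnSum t l p) : l ≠ [] := by
  cases h <;> simp

theorem eq_or_exists_of_append_singleton (h : IsIterConnSum t (l ++ [q]) r) :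
    (l = [] ∧ r = q) ∨ ∃ p, IsIterConnSum t l p ∧ IsConnSum t p.2 q.2 r.2 := by
  generalize hl : l ++ [q] = l' at h
  cases h with
  | single =>
    simp only [List.append_eq_singleton_iff, List.cons.injEq, and_true, List.cons_ne_self,
      and_false, or_false] at hl
    exact .inl ⟨hl.1, hl.2.symm⟩
  | cons hp hs =>
    obtain ⟨rfl, hq⟩ := List.append_inj' hl.symm rfl
    obtain rfl := List.singleton_inj.1 hq
    exact .inr ⟨_, hp, hs⟩

theorem graphC_eq (hp : IsIterConnSum t l p) (hq : IsIterConnSum t l q) [ip : Fintype p.1]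
    [dp : DecidableEq p.1] [Fintype q.1] [DecidableEq q.1] (k : ℕ) :
    graphC k p.2 = graphC k q.2 := by
  revert ip dp
  induction hp generalizing q k with
  | single p =>
    intro _ _
    obtain ⟨-, rfl⟩ | ⟨_, hnil, -⟩ := eq_or_exists_of_append_singleton (l := []) hq
    · convert rfl
    · exact (hnil.ne_nil rfl).elim
  | @cons l₀ p₀ q₀ r hp₀ hsum ih =>
    intro _ _
    obtain ⟨hnil, -⟩ | ⟨p₀', hp₀', hsum'⟩ := eq_or_exists_of_append_singleton hq
    · exact (hp₀.ne_nil hnil).elim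
    have := hsum.finite_left
    have := hsum.finite_right
    have := hsum'.finite_left
    have := Fintype.ofFinite p₀.1
    have := Fintype.ofFinite q₀.1
    have := Fintype.ofFinite p₀'.1
    classical
    exact hsum.graphC_congr hsum' (fun m => ih hp₀' m) (fun _ => rfl) k

end IsIterConnSum

/-- `b_k` of a `t`-connected sum of `G₁, …, G_n` does not depend on the
choices made in the construction. -/
theorem bk_iterConnSum_independent (t : ℕ) (l : List ((W : Type) × SimpleGraph W))
    {V₁ V₂ : Type} [Fintype V₁] [DecidableEq V₁] [Fintype V₂] [DecidableEq V₂]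
    (G : SimpleGraph V₁) (H : SimpleGraph V₂)
    (hG : IsIterConnSum t l ⟨V₁, G⟩) (hH : IsIterConnSum t l ⟨V₂, H⟩) :
    ∀ k, graphB k G = graphB k H := by
  have hC : ∀ m, graphC m G = graphC m H := hG.graphC_eq hH
  intro k
  rw [graphB_eq_graphC_sub, graphB_eq_graphC_sub, hC, hC]
end

section
/- Let T be any tree with n+1 vertices. Then b_k(T) = (k−1)·C(n,k) for all k ≥ 1. In particular b_k(T) does not depend on the shape of the tree, only on its number of vertices. -/
open Finset

/-!
For a forest on a finite vertex set, the number of components equals the number of vertices minus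
the number of edges; every induced subgraph of a tree is a forest. Hence
`b_k(T) = (k - 1) C(n+1, k) - ∑_W e(T[W])`, and double counting pairs (edge, `k`-subset containing
it) gives `∑_W e(T[W]) = n C(n-1, k-2) = (k-1) C(n, k-1)`. Pascal's rule finishes the computation.
-/

namespace SimpleGraph

variable {V : Type} {G : SimpleGraph V}

lemma IsAcyclic.card_connectedComponent_add_card_edgeSet [Finite V] (hG : G.IsAcyclic) :
    Nat.card G.ConnectedComponent + Nat.card G.edgeSet = Nat.card V := by
  have := Fintype.ofFinite V
  classical
  have hcomp (c : G.ConnectedComponent) :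
      ∑ v : c.supp, G.degree v + 2 = ∑ _ : c.supp, 2 := by
    have htree : (G.induce c.supp).IsTree := hG.isTree_connectedComponent c
    have hdeg (v : c.supp) : (G.induce c.supp).degree v = G.degree v :=
      degree_induce_of_neighborSet_subset fun _ ↦ c.mem_supp_of_adj_mem_supp v.2
    simp_rw [← hdeg, sum_degrees_eq_twice_card_edges, sum_const, card_univ, smul_eq_mul,
      ← htree.card_edgeFinset]
    ring
  have key : ∑ v, G.degree v + 2 * Nat.card G.ConnectedComponent = ∑ _ : V, 2 := by
    rw [← Fintype.sum_fiberwise G.connectedComponentMk,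
      ← Fintype.sum_fiberwise G.connectedComponentMk, Nat.card_eq_fintype_card, ← card_univ,
      mul_comm, ← smul_eq_mul, ← sum_const, ← sum_add_distrib]
    exact Fintype.sum_congr _ _ fun c ↦ by convert hcomp c <;> rfl
  rw [sum_degrees_eq_twice_card_edges, sum_const, card_univ, smul_eq_mul] at key
  rw [Nat.card_eq_fintype_card (α := V), Nat.card_eq_fintype_card (α := G.edgeSet),
    ← edgeFinset_card]
  lia

variable [Fintype V]

lemma card_edgeSet_induce [DecidableEq V] [DecidableRel G.Adj] (W : Finset V) :
    Nat.card (G.induce (W : Set V)).edgeSet = #(G.edgeFinset ∩ W.sym2) := by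
  rw [Nat.card_eq_fintype_card, ← edgeFinset_card]
  convert congr_arg card (map_edgeFinset_induce (G := G) (s := (W : Set V))) using 2
  · rw [card_map]
    congr!
  · rw [toFinset_coe]

lemma card_filter_powersetCard_mem_sym2 [DecidableEq V] {a b : V} (hab : a ≠ b) (j : ℕ) :
    #{W ∈ powersetCard (j + 2) univ | s(a, b) ∈ W.sym2} = (Fintype.card V - 2).choose j := by
  have hmem (W : Finset V) : s(a, b) ∈ W.sym2 ↔ {a, b} ⊆ W := by
    simp [insert_subset_iff]
  simp_rw [hmem]
  rw [card_filter_powersetCard_subset _ _ _ (subset_univ _) (by simp [card_pair hab]),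
    card_pair hab, card_univ, Nat.add_sub_cancel]

lemma sum_card_edgeSet_induce_powersetCard (j : ℕ) :
    ∑ W ∈ powersetCard (j + 2) (univ : Finset V), Nat.card (G.induce (W : Set V)).edgeSet
      = Nat.card G.edgeSet * (Fintype.card V - 2).choose j := by
  classical
  simp_rw [card_edgeSet_induce, ← filter_mem_eq_inter, card_filter]
  rw [sum_comm, Nat.card_eq_fintype_card, ← edgeFinset_card, ← smul_eq_mul, ← sum_const]
  refine sum_congr rfl fun e he ↦ ?_
  induction e using Sym2.ind with
  | h a b =>
    rw [← card_filter, card_filter_powersetCard_mem_sym2 (G.ne_of_adj (by simpa using he))]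

lemma IsAcyclic.graphB_eq [DecidableEq V] (hG : G.IsAcyclic) (k : ℕ) :
    graphB k G = ((k : ℤ) - 1) * (Fintype.card V).choose k
      - ∑ W ∈ powersetCard k (univ : Finset V), Nat.card (G.induce (W : Set V)).edgeSet := by
  have hterm (W : Finset V) (hW : W ∈ powersetCard k univ) :
      (Nat.card (G.induce (W : Set V)).ConnectedComponent : ℤ) - 1
        = (k - 1 : ℤ) - Nat.card (G.induce (W : Set V)).edgeSet := by
    have := (hG.induce (W : Set V)).card_connectedComponent_add_card_edgeSet
    rw [Nat.card_coe_set_eq (W : Set V), Set.ncard_coe_finset, (mem_powersetCard.mp hW).2] at this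
    lia
  rw [graphB, sum_congr rfl hterm, sum_sub_distrib, sum_const, card_powersetCard, card_univ,
    nsmul_eq_mul, mul_comm, Nat.cast_sum]

end SimpleGraph

/-- for any tree `T` with `n+1` vertices, `b_k(T) = (k-1)·C(n,k)` for `k ≥ 1`;
in particular it only depends on the number of vertices. -/
theorem bk_tree {V : Type} [Fintype V] [DecidableEq V] (n : ℕ)
    (T : SimpleGraph V) (hT : T.IsTree) (hcard : Fintype.card V = n + 1)
    (k : ℕ) (hk : 1 ≤ k) :
    graphB k T = ((k : ℤ) - 1) * (n.choose k) := by
  classical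
  rw [hT.isAcyclic.graphB_eq, hcard]
  rcases k with _ | _ | j
  · exact absurd hk (by norm_num)
  · have hW (W : Finset V) (hW : W ∈ powersetCard 1 univ) :
        Nat.card (T.induce (W : Set V)).edgeSet = 0 := by
      obtain ⟨v, rfl⟩ := card_eq_one.mp (mem_powersetCard.mp hW).2
      simp
    rw [sum_eq_zero hW]
    simp
  · have hedges : Nat.card T.edgeSet = n := by
      rw [← Nat.add_right_cancel_iff, (SimpleGraph.isTree_iff_connected_and_card.mp hT).2,
        Nat.card_eq_fintype_card, hcard]
    have hchoose : n * (n - 1).choose j = (j + 1) * n.choose (j + 1) := by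
      cases n with
      | zero => simp
      | succ m => simpa [mul_comm] using Nat.add_one_mul_choose_eq m j
    rw [SimpleGraph.sum_card_edgeSet_induce_powersetCard, hedges, hcard, Nat.add_sub_add_right,
      hchoose, Nat.choose_succ_succ' n (j + 1)]
    push_cast
    ring
end

section
/- Let P be a path graph with n+1 vertices. Then b_k(P) = (k−1)·C(n,k) for all k ≥ 1. -/
open Finset

/-!
In the path `0 — 1 — ⋯ — n`, the subgraph induced on `W` is the disjoint union of the maximal
runs of consecutive vertices of `W`, so its components are counted by the vertices of `W` whose
predecessor is not in `W`. Counting such vertices over all `k`-subsets: the vertex `0` qualifies in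
`C(n, k-1)` subsets and each other vertex `i` (with `i ∈ W`, `i - 1 ∉ W`) in `C(n-1, k-1)`, hence
`b_k = C(n, k-1) + n C(n-1, k-1) - C(n+1, k) = (k-1) C(n, k)`.
-/

namespace Finset

variable {α : Type*} [DecidableEq α]

lemma card_filter_mem_powersetCard {t : Finset α} {a : α} (ha : a ∈ t) {k : ℕ} (hk : 1 ≤ k) :
    #{W ∈ t.powersetCard k | a ∈ W} = (#t - 1).choose (k - 1) := by
  simpa using card_filter_powersetCard_subset {a} t k (by simpa) (by simpa)

lemma card_filter_mem_notMem_powersetCard [Fintype α] {a b : α} (hab : a ≠ b) {k : ℕ}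
    (hk : 1 ≤ k) :
    #{W ∈ (univ : Finset α).powersetCard k | a ∈ W ∧ b ∉ W}
      = (Fintype.card α - 2).choose (k - 1) := by
  have hfilter : {W ∈ (univ : Finset α).powersetCard k | a ∈ W ∧ b ∉ W}
      = {W ∈ (univ.erase b).powersetCard k | a ∈ W} := by
    ext W
    simp only [mem_filter, mem_powersetCard, subset_univ, true_and, subset_erase]
    tauto
  rw [hfilter, card_filter_mem_powersetCard (mem_erase.2 ⟨hab, mem_univ a⟩) hk,
    card_erase_of_mem (mem_univ b), card_univ, Nat.sub_sub]

lemma sum_card_eq_sum_card_filter_mem {ι : Type*} [Fintype α] (B : Finset ι) (f : ι → Finset α) :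
    ∑ i ∈ B, #(f i) = ∑ a, #{i ∈ B | a ∈ f i} := by
  simp only [card_eq_sum_ones, sum_filter]
  rw [sum_comm]
  simp

end Finset

namespace Nat

theorem choose_add_mul_choose_sub_choose (n j : ℕ) :
    (n.choose j + n * (n - 1).choose j : ℤ) - (n + 1).choose (j + 1) = j * n.choose (j + 1) := by
  have hmul : (n * (n - 1).choose j : ℤ) = n.choose (j + 1) * (j + 1) := by
    cases n with
    | zero => simp
    | succ m => exact_mod_cast add_one_mul_choose_eq m j
  rw [hmul, choose_succ_succ']
  push_cast
  ring

end Nat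

namespace SimpleGraph

variable {m : ℕ}

def pathBlockStarts (W : Finset (Fin m)) : Finset (Fin m) :=
  {i ∈ W | ∀ j ∈ W, (j : ℕ) + 1 ≠ i}

lemma exists_mem_pathBlockStarts_reachable (W : Finset (Fin m)) (v : Fin m) (hv : v ∈ W) :
    ∃ (s : Fin m) (hs : s ∈ pathBlockStarts W),
      ((pathGraph m).induce (W : Set (Fin m))).Reachable ⟨s, (mem_filter.1 hs).1⟩ ⟨v, hv⟩ := by
  induction hval : (v : ℕ) using Nat.strong_induction_on generalizing v with
  | _ a ih =>
  by_cases hstart : ∀ j ∈ W, (j : ℕ) + 1 ≠ v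
  · exact ⟨v, mem_filter.2 ⟨hv, hstart⟩, .refl _⟩
  obtain ⟨j, hj, hjv⟩ : ∃ j ∈ W, (j : ℕ) + 1 = v := by simpa using hstart
  obtain ⟨s, hs, hsj⟩ := ih j (by omega) j hj rfl
  exact ⟨s, hs, hsj.trans (Adj.reachable (by simp [pathGraph_adj, hjv]))⟩

lemma lt_iff_lt_of_reachable_induce_pathGraph {W : Finset (Fin m)} {t : Fin m}
    (ht : t ∈ pathBlockStarts W) {u v : (W : Set (Fin m))}
    (h : ((pathGraph m).induce (W : Set (Fin m))).Reachable u v) : u.1 < t ↔ v.1 < t := by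
  obtain ⟨p⟩ := h
  induction p with
  | nil => rfl
  | @cons a b _ hab _ ih =>
    -- a step crosses `t` only between `t - 1` and `t`, and `t - 1 ∉ W`
    have hstart := (mem_filter.1 ht).2
    have ha := hstart a a.2
    have hb := hstart b b.2
    rw [← ih, Fin.lt_def, Fin.lt_def]
    simp only [comap_adj, Function.Embedding.coe_subtype, pathGraph_adj] at hab
    omega

lemma card_connectedComponent_induce_pathGraph (W : Finset (Fin m)) :
    Nat.card ((pathGraph m).induce (W : Set (Fin m))).ConnectedComponent
      = #(pathBlockStarts W) := by
  rw [← Nat.card_eq_finsetCard]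
  refine (Nat.card_eq_of_bijective
    (fun s : pathBlockStarts W ↦ connectedComponentMk _ ⟨s.1, (mem_filter.1 s.2).1⟩) ⟨?_, ?_⟩).symm
  · rintro ⟨s, hs⟩ ⟨t, ht⟩ hst
    have hr := ConnectedComponent.exact hst
    have hlt := lt_iff_lt_of_reachable_induce_pathGraph ht hr
    have hgt := lt_iff_lt_of_reachable_induce_pathGraph hs hr.symm
    simp only [lt_self_iff_false, iff_false] at hlt hgt
    exact Subtype.ext (le_antisymm (not_lt.1 hgt) (not_lt.1 hlt))
  · refine ConnectedComponent.ind fun ⟨v, hv⟩ ↦ ?_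
    obtain ⟨s, hs, hsv⟩ := exists_mem_pathBlockStarts_reachable W v hv
    exact ⟨⟨s, hs⟩, ConnectedComponent.sound hsv⟩

variable {n : ℕ}

lemma zero_mem_pathBlockStarts {W : Finset (Fin (n + 1))} : 0 ∈ pathBlockStarts W ↔ 0 ∈ W := by
  simp [pathBlockStarts]

lemma succ_mem_pathBlockStarts {W : Finset (Fin (n + 1))} (j : Fin n) :
    j.succ ∈ pathBlockStarts W ↔ j.succ ∈ W ∧ j.castSucc ∉ W := by
  simp only [pathBlockStarts, mem_filter, Fin.val_succ, and_congr_right_iff]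
  refine fun _ ↦ ⟨fun h hj ↦ h _ hj rfl, fun h i hi hij ↦ h ?_⟩
  rwa [show j.castSucc = i from Fin.ext (by rw [Fin.val_castSucc]; omega)]

lemma sum_card_pathBlockStarts {k : ℕ} (hk : 1 ≤ k) :
    ∑ W ∈ (univ : Finset (Fin (n + 1))).powersetCard k, #(pathBlockStarts W)
      = n.choose (k - 1) + n * (n - 1).choose (k - 1) := by
  rw [sum_card_eq_sum_card_filter_mem, Fin.sum_univ_succ]
  simp only [zero_mem_pathBlockStarts, succ_mem_pathBlockStarts]
  rw [card_filter_mem_powersetCard (mem_univ _) hk]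
  simp only [card_filter_mem_notMem_powersetCard Fin.castSucc_lt_succ.ne' hk]
  simp

end SimpleGraph

/-- for the path graph with `n+1` vertices, `b_k = (k-1)·C(n,k)` for `k ≥ 1`. -/
theorem bk_pathGraph (n k : ℕ) (hk : 1 ≤ k) :
    graphB k (SimpleGraph.pathGraph (n + 1)) = ((k : ℤ) - 1) * (n.choose k) := by
  obtain ⟨j, rfl⟩ : ∃ j, k = j + 1 := ⟨k - 1, by omega⟩
  have hstarts := SimpleGraph.sum_card_pathBlockStarts (n := n) hk
  simp only [graphB, SimpleGraph.card_connectedComponent_induce_pathGraph, sum_sub_distrib,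
    sum_const, card_powersetCard, card_univ, Fintype.card_fin, nsmul_eq_mul, mul_one]
  rw [← Nat.cast_sum, hstarts]
  simpa using Nat.choose_add_mul_choose_sub_choose n j
end

section
/- Let G be the cycle graph C_n and v any vertex of G. Then the induced subgraph on the remaining n−1 vertices is a path (hence a tree) with n−1 vertices, so b_k(G|_{V∖{v}}) = (k−1)·C(n−2,k). -/
open Finset

/-!
Removing `v` from `C_n` leaves the path `v + 1, v + 2, …, v - 1`, a tree on `m = n - 1` vertices.
Every induced subgraph of a forest is a forest, and a forest has `#vertices - #edges` components.
Summing over the `k`-subsets `W`, and noting that each edge lies in `C(m - 2, k - 2)` of them, gives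
`b_k = (k - 1) C(m, k) - (m - 1) C(m - 2, k - 2) = (k - 1) C(m - 1, k)` for a tree with `k ≥ 2`.
-/

lemma Nat.mul_choose_pred_eq (m r : ℕ) : m * (m - 1).choose r = (r + 1) * m.choose (r + 1) := by
  cases m with
  | zero => simp
  | succ q => rw [Nat.add_sub_cancel, Nat.add_one_mul_choose_eq, mul_comm]

lemma Fin.val_succ_sub_succ_eq_one_iff {p : ℕ} (i j : Fin p) :
    (i.succ - j.succ).val = 1 ↔ i.val = j.val + 1 := by
  rcases le_or_gt j.succ i.succ with h | h
  · rw [Fin.coe_sub_iff_le.2 h, Fin.val_succ, Fin.val_succ]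
    omega
  · rw [Fin.coe_sub_iff_lt.2 h, Fin.val_succ, Fin.val_succ]
    rw [Fin.lt_def, Fin.val_succ, Fin.val_succ] at h
    omega

lemma Finset.card_filter_powersetCard_mk_mem_sym2 {V : Type*} [Fintype V] [DecidableEq V]
    {a b : V} (hab : a ≠ b) (k : ℕ) :
    #{W ∈ powersetCard (k + 2) univ | s(a, b) ∈ W.sym2} = (Fintype.card V - 2).choose k := by
  have h := card_filter_powersetCard_subset {a, b} univ (k + 2) (subset_univ _)
    (by rw [card_pair hab]; omega)
  rw [card_pair hab, card_univ, Nat.add_sub_cancel] at h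
  simpa only [mk_mem_sym2_iff, insert_subset_iff, singleton_subset_iff] using h

namespace SimpleGraph

section Forest

variable {V : Type*} {G : SimpleGraph V}

lemma connectedComponentMk_eq_of_mem_edgeSet {e : Sym2 V} (he : e ∈ G.edgeSet) {a b : V}
    (ha : a ∈ e) (hb : b ∈ e) : G.connectedComponentMk a = G.connectedComponentMk b := by
  induction e using Sym2.ind with
  | _ x y =>
    rw [mem_edgeSet] at he
    rw [Sym2.mem_iff] at ha hb
    rw [ConnectedComponent.eq]
    rcases ha with rfl | rfl <;> rcases hb with rfl | rfl
    all_goals first | rfl | exact he.reachable | exact he.reachable.symm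

section Finite

variable [Fintype V] [DecidableEq V] [DecidableRel G.Adj]

lemma sum_card_edgeFinset_inter_supp_sym2 :
    ∑ c : G.ConnectedComponent, #(G.edgeFinset ∩ c.supp.toFinset.sym2) = #G.edgeFinset := by
  classical
  rw [card_eq_sum_card_fiberwise (f := fun e => G.connectedComponentMk e.out.1)
    (fun _ _ => mem_univ _)]
  refine sum_congr rfl fun c _ => congrArg _ ?_
  ext e
  simp only [mem_inter, mem_filter, mem_sym2_iff, Set.mem_toFinset,
    ConnectedComponent.mem_supp_iff, and_congr_right_iff]
  intro he
  rw [mem_edgeFinset] at he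
  exact ⟨fun h => h _ e.out_fst_mem,
    fun h a ha => (connectedComponentMk_eq_of_mem_edgeSet he ha e.out_fst_mem).trans h⟩

lemma sum_card_connectedComponent_supp :
    ∑ c : G.ConnectedComponent, Fintype.card c.supp = Fintype.card V := by
  classical
  rw [← card_univ (α := V), card_eq_sum_card_fiberwise (f := G.connectedComponentMk)
    (fun _ _ => mem_univ _)]
  refine sum_congr rfl fun c _ => ?_
  rw [Fintype.card_subtype]
  simp only [ConnectedComponent.mem_supp_iff]

/-- Each component is a tree, with one vertex more than it has edges. -/
theorem IsAcyclic.card_connectedComponent_add_card_edgeFinset (hG : G.IsAcyclic) :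
    Nat.card G.ConnectedComponent + #G.edgeFinset = Fintype.card V := by
  have hcomp (c : G.ConnectedComponent) :
      #(G.edgeFinset ∩ c.supp.toFinset.sym2) + 1 = Fintype.card c.supp := by
    classical
    rw [← map_edgeFinset_induce, card_map]
    convert (hG.isTree_connectedComponent c).card_edgeFinset <;> rfl
  rw [← sum_card_edgeFinset_inter_supp_sym2 (G := G), ← sum_card_connectedComponent_supp (G := G),
    Nat.card_eq_fintype_card, ← card_univ, card_eq_sum_ones, ← sum_add_distrib]
  exact sum_congr rfl fun c _ => by rw [add_comm, hcomp]

lemma card_edgeFinset_induce (W : Finset V) :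
    #(G.induce (W : Set V)).edgeFinset = #{e ∈ G.edgeFinset | e ∈ W.sym2} := by
  convert congrArg card (map_edgeFinset_induce (G := G) (s := (W : Set V))) using 1
  · rw [card_map]
    congr!
  · rw [filter_mem_eq_inter, Finset.toFinset_coe]

lemma sum_card_edgeFinset_induce (k : ℕ) :
    ∑ W ∈ powersetCard (k + 2) (univ : Finset V), #(G.induce (W : Set V)).edgeFinset
      = #G.edgeFinset * (Fintype.card V - 2).choose k := by
  calc _ = ∑ W ∈ powersetCard (k + 2) univ, #{e ∈ G.edgeFinset | e ∈ W.sym2} :=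
        sum_congr rfl fun W _ => card_edgeFinset_induce W
    _ = ∑ e ∈ G.edgeFinset, #{W ∈ powersetCard (k + 2) univ | e ∈ W.sym2} :=
        (sum_card_bipartiteAbove_eq_sum_card_bipartiteBelow _).symm
    _ = _ := by
        refine sum_const_nat fun e he => ?_
        induction e using Sym2.ind with
        | _ a b => exact card_filter_powersetCard_mk_mem_sym2 (G.ne_of_adj (by simpa using he)) k

end Finite

lemma IsAcyclic.card_connectedComponent_induce [DecidableEq V] [DecidableRel G.Adj]
    (hG : G.IsAcyclic) (W : Finset V) :
    (Nat.card (G.induce (W : Set V)).ConnectedComponent : ℤ) =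
      #W - #(G.induce (W : Set V)).edgeFinset := by
  have h := (hG.induce (W : Set V)).card_connectedComponent_add_card_edgeFinset
  simp only [coe_sort_coe, Fintype.card_coe] at h
  omega

end Forest

theorem IsAcyclic.graphB_add_two {V : Type} [Fintype V] [DecidableEq V]
    {G : SimpleGraph V} [DecidableRel G.Adj] (hG : G.IsAcyclic) (k : ℕ) :
    graphB (k + 2) G = (k + 1) * (Fintype.card V).choose (k + 2)
      - #G.edgeFinset * (Fintype.card V - 2).choose k := by
  have h := congrArg (Nat.cast : ℕ → ℤ) (sum_card_edgeFinset_induce (G := G) k)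
  push_cast at h
  unfold graphB
  rw [sum_congr rfl fun W hW => by
    rw [hG.card_connectedComponent_induce W, (mem_powersetCard.1 hW).2]]
  simp only [sub_right_comm _ _ (1 : ℤ), sum_sub_distrib, sum_const, card_powersetCard, card_univ,
    nsmul_eq_mul, h]
  push_cast
  ring

theorem IsTree.graphB_eq {V : Type} [Fintype V] [DecidableEq V]
    {G : SimpleGraph V} (hG : G.IsTree) {k : ℕ} (hk : 1 ≤ k) :
    graphB k G = ((k : ℤ) - 1) * (Fintype.card V - 1).choose k := by
  classical
  have hV := hG.card_edgeFinset
  obtain rfl | ⟨r, rfl⟩ : k = 1 ∨ ∃ r, k = r + 2 :=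
    (Nat.eq_or_lt_of_le hk).imp Eq.symm fun h => ⟨k - 2, by omega⟩
  · rw [Nat.cast_one, sub_self, zero_mul, graphB]
    refine sum_eq_zero fun W hW => ?_
    have hW1 := (mem_powersetCard.1 hW).2
    have hE := card_edgeFinset_le_card_choose_two (G := G.induce (W : Set V))
    simp only [coe_sort_coe, Fintype.card_coe, hW1, Nat.choose_succ_self, Nat.le_zero] at hE
    rw [hG.isAcyclic.card_connectedComponent_induce W, hW1, hE]
    simp
  · rw [hG.isAcyclic.graphB_add_two, ← hV, Nat.add_sub_cancel]
    have hpascal := Nat.choose_succ_succ' #G.edgeFinset (r + 1)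
    have hpred := Nat.mul_choose_pred_eq #G.edgeFinset r
    push_cast [hpascal, show #G.edgeFinset + 1 - 2 = #G.edgeFinset - 1 by omega]
    rw [← Nat.cast_mul, hpred]
    push_cast
    ring

lemma card_edgeSet_pathGraph (m : ℕ) : Nat.card (pathGraph (m + 1)).edgeSet = m := by
  refine (Nat.card_eq_of_bijective (fun i : Fin m => (⟨s(i.castSucc, i.succ), by
    simp [pathGraph_adj]⟩ : (pathGraph (m + 1)).edgeSet)) ⟨fun i j hij => ?_, ?_⟩).symm.trans
    (Nat.card_fin m)
  · simp only [Subtype.mk.injEq, Sym2.eq_iff, Fin.ext_iff, Fin.val_castSucc, Fin.val_succ] at hij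
    exact Fin.ext (by omega)
  · rintro ⟨e, he⟩
    induction e using Sym2.ind with
    | _ a b =>
      rw [mem_edgeSet, pathGraph_adj] at he
      rcases he with h | h
      · exact ⟨⟨a, by omega⟩, by simp [h]⟩
      · exact ⟨⟨b, by omega⟩, by simp [Sym2.eq_swap, h]⟩

lemma isTree_pathGraph (m : ℕ) : (pathGraph (m + 1)).IsTree := by
  rw [isTree_iff_connected_and_card, card_edgeSet_pathGraph, Nat.card_fin]
  exact ⟨pathGraph_connected m, rfl⟩

/-- Vertex `i` of the path goes to `v + (i + 1)`. -/
def pathGraphIsoInduceComplSingleton {p : ℕ} (v : Fin (p + 1)) :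
    pathGraph p ≃g (cycleGraph (p + 1)).induce ({v}ᶜ : Set (Fin (p + 1))) where
  toEquiv := (finSuccAboveEquiv 0).trans ((Equiv.addLeft v).subtypeEquiv (by simp))
  map_rel_iff' {i j} := by
    simp only [Equiv.trans_apply, finSuccAboveEquiv_apply, Equiv.subtypeEquiv_apply, comap_adj,
      Function.Embedding.coe_subtype, cycleGraph_adj', Equiv.coe_addLeft, Fin.succAbove_zero,
      add_sub_add_left_eq_sub, Fin.val_succ_sub_succ_eq_one_iff, pathGraph_adj]
    omega

end SimpleGraph

/-- deleting any vertex from the cycle `C_n` yields a path (hence a tree) on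
`n-1` vertices, so its `b_k` equals `(k-1)·C(n-2,k)`. -/
theorem bk_cycle_delete_vertex (n : ℕ) (hn : 3 ≤ n) (v : Fin n) :
    Nonempty (((SimpleGraph.cycleGraph n).induce ({v}ᶜ : Set (Fin n))) ≃g
      SimpleGraph.pathGraph (n - 1)) ∧
    ((SimpleGraph.cycleGraph n).induce ({v}ᶜ : Set (Fin n))).IsTree ∧
    Fintype.card ({v}ᶜ : Set (Fin n)) = n - 1 ∧
    ∀ k, 1 ≤ k →
      graphB k ((SimpleGraph.cycleGraph n).induce ({v}ᶜ : Set (Fin n))) =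
        ((k : ℤ) - 1) * ((n - 2).choose k) := by
  obtain ⟨q, rfl⟩ : ∃ q, n = q + 2 := ⟨n - 2, by omega⟩
  have iso := SimpleGraph.pathGraphIsoInduceComplSingleton v
  have hcard : Fintype.card ({v}ᶜ : Set (Fin (q + 2))) = q + 2 - 1 := by
    rw [Fintype.card_compl_set]
    simp
  have htree := iso.isTree_iff.1 (SimpleGraph.isTree_pathGraph q)
  refine ⟨⟨iso.symm⟩, htree, hcard, fun k hk => ?_⟩
  rw [htree.graphB_eq hk, hcard]
  rfl
end

section
/- Let Δ₁, Δ₂ be simplicial complexes on n₁ and n₂ vertices respectively, and let Δ be a t-connected sum of Δ₁ and Δ₂ with t ≥ 3. Then b_k(Δ) = Σ_{i=0}^{k} [b_i(Δ₁)·C(n₂−t, k−i) + b_i(Δ₂)·C(n₁−t, k−i)] + C(n₁+n₂−2t, k). -/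
open Finset

/-!
The numbers `b_k` only see the 1-skeleton, and for `t ≥ 3` removing the glued face removes no
edge, so the skeleton of a `t`-connected sum is the union of the two skeletons glued along a
`t`-clique `C`. For such a gluing and any vertex set `W`, the components of `G[W]` are those of
`G₁[W]` and of `G₂[W]`, except that the two components meeting `W ∩ C` become one: a walk that
leaves one side re-enters it through `C`, where a clique edge short-cuts the detour. Summing over
`k`-sets `W`, sorted by their traces on the two sides, gives the formula; the last binomial counts
the `W` that miss `C`.
-/

namespace SimpleGraph

variable {α β₁ β₂ : Type*} {H : SimpleGraph α} {H₁ : SimpleGraph β₁} {H₂ : SimpleGraph β₂}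

structure IsCliqueGluing (e₁ : H₁ ↪g H) (e₂ : H₂ ↪g H) : Prop where
  mem_range_or : ∀ v, v ∈ Set.range e₁ ∨ v ∈ Set.range e₂
  adj_mem_range : ∀ ⦃u v⦄, H.Adj u v →
    (u ∈ Set.range e₁ ∧ v ∈ Set.range e₁) ∨ (u ∈ Set.range e₂ ∧ v ∈ Set.range e₂)
  isClique_inter : H.IsClique (Set.range e₁ ∩ Set.range e₂)

open Classical in
theorem IsClique.ncard_image_connectedComponentMk {s : Set α} (hs : H.IsClique s) :
    (H.connectedComponentMk '' s).ncard = if s.Nonempty then 1 else 0 := by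
  split_ifs with h
  · obtain ⟨v, hv⟩ := h
    refine Set.ncard_eq_one.2 ⟨H.connectedComponentMk v, ?_⟩
    refine Set.eq_singleton_iff_unique_mem.2 ⟨⟨v, hv, rfl⟩, ?_⟩
    rintro _ ⟨w, hw, rfl⟩
    rcases eq_or_ne w v with rfl | hwv
    · rfl
    · exact ConnectedComponent.sound (hs hw hv hwv).reachable
  · simp [Set.not_nonempty_iff_eq_empty.1 h]

namespace IsCliqueGluing

variable {e₁ : H₁ ↪g H} {e₂ : H₂ ↪g H}

theorem symm (hg : IsCliqueGluing e₁ e₂) : IsCliqueGluing e₂ e₁ where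
  mem_range_or v := (hg.mem_range_or v).symm
  adj_mem_range _ _ h := (hg.adj_mem_range h).symm
  isClique_inter := Set.inter_comm (Set.range e₁) _ ▸ hg.isClique_inter

theorem reachable_of_mem_range (hg : IsCliqueGluing e₁ e₂) {x y : β₁}
    (hx : e₁ x ∈ Set.range e₂) (hy : e₁ y ∈ Set.range e₂) : H₁.Reachable x y := by
  rcases eq_or_ne x y with rfl | hxy
  · rfl
  · exact (e₁.map_adj_iff.1 <| hg.isClique_inter ⟨⟨x, rfl⟩, hx⟩ ⟨⟨y, rfl⟩, hy⟩
      (e₁.injective.ne hxy)).reachable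

/-- Every walk in `H` starting on the `H₁` side can be traced inside `H₁`, detouring through
`H₂` only between two vertices of the common clique. -/
theorem reachable_imp (hg : IsCliqueGluing e₁ e₂) {x : β₁} {v : α}
    (hv : H.Reachable (e₁ x) v) :
    (∀ y, e₁ y = v → H₁.Reachable x y) ∧
      ∀ y, e₂ y = v → ∃ c d, e₁ c = e₂ d ∧ H₁.Reachable x c ∧ H₂.Reachable d y := by
  rw [reachable_iff_reflTransGen] at hv
  induction hv with
  | refl =>
    exact ⟨fun y hy => e₁.injective hy ▸ .rfl, fun y hy => ⟨x, y, hy.symm, .rfl, .rfl⟩⟩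
  | tail _ hvw ih =>
    rcases hg.adj_mem_range hvw with ⟨⟨a, rfl⟩, ⟨b, rfl⟩⟩ | ⟨⟨a, rfl⟩, ⟨b, rfl⟩⟩
    · have hxb : H₁.Reachable x b := (ih.1 a rfl).trans (e₁.map_adj_iff.1 hvw).reachable
      exact ⟨fun y hy => e₁.injective hy ▸ hxb, fun y hy => ⟨b, y, hy.symm, hxb, .rfl⟩⟩
    · obtain ⟨c, d, hcd, hxc, hda⟩ := ih.2 a rfl
      have hdb : H₂.Reachable d b := hda.trans (e₂.map_adj_iff.1 hvw).reachable
      refine ⟨fun y hy => hxc.trans (hg.reachable_of_mem_range ⟨d, hcd.symm⟩ ⟨b, hy.symm⟩),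
        fun y hy => ⟨c, d, hcd, hxc, e₂.injective hy ▸ hdb⟩⟩

theorem map_injective (hg : IsCliqueGluing e₁ e₂) :
    Function.Injective (ConnectedComponent.map e₁.toHom) := by
  intro C D hCD
  induction C using ConnectedComponent.ind
  induction D using ConnectedComponent.ind
  simp only [ConnectedComponent.map_mk, ConnectedComponent.eq, Embedding.coe_toHom] at hCD ⊢
  exact (hg.reachable_imp hCD).1 _ rfl

theorem range_map_union (hg : IsCliqueGluing e₁ e₂) :
    Set.range (ConnectedComponent.map e₁.toHom) ∪ Set.range (ConnectedComponent.map e₂.toHom)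
      = Set.univ := by
  refine Set.eq_univ_of_forall fun K => ?_
  induction K using ConnectedComponent.ind with | h v => ?_
  rcases hg.mem_range_or v with ⟨x, rfl⟩ | ⟨y, rfl⟩
  · exact .inl ⟨H₁.connectedComponentMk x, rfl⟩
  · exact .inr ⟨H₂.connectedComponentMk y, rfl⟩

theorem range_map_inter (hg : IsCliqueGluing e₁ e₂) :
    Set.range (ConnectedComponent.map e₁.toHom) ∩ Set.range (ConnectedComponent.map e₂.toHom)
      = H.connectedComponentMk '' (Set.range e₁ ∩ Set.range e₂) := by
  ext K
  constructor
  · rintro ⟨⟨C, rfl⟩, ⟨D, hDC⟩⟩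
    induction C using ConnectedComponent.ind
    induction D using ConnectedComponent.ind
    simp only [ConnectedComponent.map_mk, ConnectedComponent.eq, Embedding.coe_toHom] at hDC ⊢
    obtain ⟨c, d, hcd, hxc, -⟩ := (hg.reachable_imp hDC.symm).2 _ rfl
    exact ⟨e₁ c, ⟨⟨c, rfl⟩, d, hcd.symm⟩, ConnectedComponent.sound (hxc.map e₁.toHom).symm⟩
  · rintro ⟨_, ⟨⟨x, rfl⟩, y, hyx⟩, rfl⟩
    exact ⟨⟨H₁.connectedComponentMk x, rfl⟩, ⟨H₂.connectedComponentMk y, by simp [hyx]⟩⟩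

open Classical in
theorem card_connectedComponent_add [Finite α] (hg : IsCliqueGluing e₁ e₂) :
    Nat.card H.ConnectedComponent + (if (Set.range e₁ ∩ Set.range e₂).Nonempty then 1 else 0)
      = Nat.card H₁.ConnectedComponent + Nat.card H₂.ConnectedComponent := by
  have : Finite β₁ := .of_injective e₁ e₁.injective
  have : Finite β₂ := .of_injective e₂ e₂.injective
  rw [← hg.isClique_inter.ncard_image_connectedComponentMk, ← hg.range_map_inter,
    ← Set.ncard_univ, ← hg.range_map_union, Set.ncard_union_add_ncard_inter,
    Set.ncard_range_of_injective hg.map_injective,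
    Set.ncard_range_of_injective hg.symm.map_injective]

end IsCliqueGluing

def Embedding.restrictPreimage (e : H₁ ↪g H) (s : Set α) : H₁.induce (e ⁻¹' s) ↪g H.induce s where
  toFun := s.restrictPreimage e
  inj' := e.injective.restrictPreimage s
  map_rel_iff' := e.map_adj_iff

theorem Embedding.range_restrictPreimage (e : H₁ ↪g H) (s : Set α) :
    Set.range (e.restrictPreimage s) = Subtype.val ⁻¹' Set.range e := by
  ext ⟨v, hv⟩
  constructor
  · rintro ⟨x, hx⟩
    exact ⟨x, congrArg Subtype.val hx⟩
  · rintro ⟨x, rfl⟩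
    exact ⟨⟨x, hv⟩, rfl⟩

namespace IsCliqueGluing

variable {e₁ : H₁ ↪g H} {e₂ : H₂ ↪g H}

theorem restrictPreimage (hg : IsCliqueGluing e₁ e₂) (s : Set α) :
    IsCliqueGluing (e₁.restrictPreimage s) (e₂.restrictPreimage s) where
  mem_range_or v := by
    simp only [Embedding.range_restrictPreimage]
    exact hg.mem_range_or v
  adj_mem_range u v h := by
    simp only [Embedding.range_restrictPreimage]
    exact hg.adj_mem_range h
  isClique_inter u hu v hv huv := by
    simp only [Embedding.range_restrictPreimage, ← Set.preimage_inter] at hu hv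
    exact hg.isClique_inter hu hv (Subtype.coe_ne_coe.2 huv)

open Classical in
theorem card_connectedComponent_induce [Finite α] (hg : IsCliqueGluing e₁ e₂) (s : Set α) :
    (Nat.card (H.induce s).ConnectedComponent : ℤ) - 1 =
      ((Nat.card (H₁.induce (e₁ ⁻¹' s)).ConnectedComponent : ℤ) - 1) +
      ((Nat.card (H₂.induce (e₂ ⁻¹' s)).ConnectedComponent : ℤ) - 1) +
      if Disjoint s (Set.range e₁ ∩ Set.range e₂) then 1 else 0 := by
  have h := (hg.restrictPreimage s).card_connectedComponent_add
  have hne : (Set.range (e₁.restrictPreimage s) ∩ Set.range (e₂.restrictPreimage s)).Nonempty ↔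
      ¬ Disjoint s (Set.range e₁ ∩ Set.range e₂) := by
    simp only [Embedding.range_restrictPreimage, ← Set.preimage_inter,
      Set.not_disjoint_iff_nonempty_inter, Subtype.preimage_coe_nonempty]
  simp only [hne, ite_not] at h
  split_ifs at h ⊢ <;> omega

end IsCliqueGluing

end SimpleGraph

namespace Finset

variable {α β : Type*} [Fintype β] [DecidableEq α] {f : β → α} (hf : f.Injective)

theorem image_preimage_eq_inter (W : Finset α) :
    (W.preimage f hf.injOn).image f = W ∩ univ.image f := by
  ext a
  simp only [mem_image, mem_preimage, mem_inter, mem_univ, true_and]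
  constructor
  · rintro ⟨x, hx, rfl⟩
    exact ⟨hx, x, rfl⟩
  · rintro ⟨ha, x, rfl⟩
    exact ⟨x, ha, rfl⟩

theorem preimage_image_union [Fintype α] {S : Finset β} {T : Finset α}
    (hT : T ⊆ (univ.image f)ᶜ) :
    (S.image f ∪ T).preimage f hf.injOn = S := by
  ext x
  simp only [mem_preimage, mem_union, hf.mem_finset_image]
  exact or_iff_left fun hx => mem_compl.1 (hT hx) (mem_image_of_mem f (mem_univ x))

theorem image_union_sdiff [Fintype α] {S : Finset β} {T : Finset α} (hT : T ⊆ (univ.image f)ᶜ) :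
    (S.image f ∪ T) \ univ.image f = T := by
  rw [union_sdiff_distrib, sdiff_eq_empty_iff_subset.2 (image_subset_image (subset_univ S)),
    empty_union, sdiff_eq_self_of_disjoint (subset_compl_iff_disjoint_right.1 hT)]

/-- A `k`-set `W` is determined by its trace `f ⁻¹ W` and its part outside the range of `f`. -/
theorem sum_powersetCard_filter_card_preimage [Fintype α] {M : Type*} [AddCommMonoid M]
    {i k : ℕ} (hik : i ≤ k) (g : Finset β → M) :
    ∑ W ∈ powersetCard k univ with #(W.preimage f hf.injOn) = i, g (W.preimage f hf.injOn) =
      ∑ p ∈ powersetCard i univ ×ˢ powersetCard (k - i) (univ.image f)ᶜ, g p.1 := by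
  refine sum_nbij' (fun W => (W.preimage f hf.injOn, W \ univ.image f))
    (fun p => p.1.image f ∪ p.2) ?_ ?_ ?_ ?_ fun _ _ => rfl
  · intro W hW
    obtain ⟨hWk, hWi⟩ := mem_filter.1 hW
    have hcard := card_sdiff_add_card_inter W (univ.image f)
    rw [← image_preimage_eq_inter hf, card_image_of_injective _ hf, hWi,
      (mem_powersetCard.1 hWk).2] at hcard
    simp only [mem_product, mem_powersetCard, subset_univ, true_and]
    exact ⟨hWi, fun x hx => mem_compl.2 (mem_sdiff.1 hx).2, by omega⟩
  · rintro ⟨S, T⟩ hST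
    simp only [mem_product, mem_powersetCard, subset_univ, true_and] at hST
    obtain ⟨hS, hT, hTk⟩ := hST
    have hdisj : Disjoint (S.image f) T := disjoint_of_subset_left
      (image_subset_image (subset_univ S)) (subset_compl_iff_disjoint_right.1 hT).symm
    refine mem_filter.2 ⟨mem_powersetCard.2 ⟨subset_univ _, ?_⟩, ?_⟩
    · rw [card_union_of_disjoint hdisj, card_image_of_injective _ hf, hS, hTk]
      omega
    · rw [preimage_image_union hf hT, hS]
  · intro W _
    rw [image_preimage_eq_inter hf]
    exact sup_inf_sdiff W _
  · rintro ⟨S, T⟩ hST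
    have hT : T ⊆ (univ.image f)ᶜ := (mem_powersetCard.1 (mem_product.1 hST).2).1
    simp only [preimage_image_union hf hT, image_union_sdiff hT]

theorem sum_powersetCard_preimage_s18 [Fintype α] {M : Type*} [AddCommMonoid M] (k : ℕ)
    (g : Finset β → M) :
    ∑ W ∈ powersetCard k univ, g (W.preimage f hf.injOn) =
      ∑ i ∈ range (k + 1), (Fintype.card α - Fintype.card β).choose (k - i) •
        ∑ S ∈ powersetCard i univ, g S := by
  rw [← sum_fiberwise_of_maps_to (g := fun W => #(W.preimage f hf.injOn))
    (t := range (k + 1)) fun W hW => by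
      rw [mem_range, Nat.lt_succ_iff, ← card_image_of_injective _ hf, image_preimage_eq_inter hf,
        ← (mem_powersetCard.1 hW).2]
      exact card_le_card inter_subset_left]
  refine sum_congr rfl fun i hi => ?_
  have hcompl : #(univ.image f)ᶜ = Fintype.card α - Fintype.card β := by
    rw [card_compl, card_image_of_injective _ hf, card_univ]
  rw [sum_powersetCard_filter_card_preimage hf (Nat.lt_succ_iff.1 (mem_range.1 hi)),
    sum_product_right, ← hcompl, ← card_powersetCard, ← sum_const]

open Classical in
theorem card_powersetCard_filter_disjoint_s18 [Fintype α] (s : Set α) (k : ℕ) :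
    #((powersetCard k univ).filter fun W : Finset α => Disjoint (W : Set α) s) =
      (Fintype.card α - s.ncard).choose k := by
  have : (powersetCard k univ).filter (fun W : Finset α => Disjoint (W : Set α) s) =
      powersetCard k s.toFinsetᶜ := by
    ext W
    simp [subset_compl_iff_disjoint_right, ← disjoint_coe, and_comm]
  rw [this, card_powersetCard, card_compl, Set.ncard_eq_toFinset_card']

end Finset

namespace SimpleGraph.IsCliqueGluing

variable {α β₁ β₂ : Type} {H : SimpleGraph α} {H₁ : SimpleGraph β₁} {H₂ : SimpleGraph β₂}
  {e₁ : H₁ ↪g H} {e₂ : H₂ ↪g H}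

theorem graphB_eq [Fintype α] [DecidableEq α] [Fintype β₁] [DecidableEq β₁] [Fintype β₂]
    [DecidableEq β₂] (hg : IsCliqueGluing e₁ e₂) (k : ℕ) :
    graphB k H = ∑ i ∈ range (k + 1),
        (graphB i H₁ * (Fintype.card α - Fintype.card β₁).choose (k - i) +
          graphB i H₂ * (Fintype.card α - Fintype.card β₂).choose (k - i)) +
      (Fintype.card α - (Set.range e₁ ∩ Set.range e₂).ncard).choose k := by
  classical
  have hW (W : Finset α) := by
    have := hg.card_connectedComponent_induce W
    rwa [← coe_preimage W e₁.injective.injOn, ← coe_preimage W e₂.injective.injOn] at this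
  rw [graphB, sum_congr rfl fun W _ => hW W, sum_add_distrib, sum_add_distrib,
    sum_powersetCard_preimage_s18 e₁.injective k
      fun S => (Nat.card (H₁.induce S).ConnectedComponent : ℤ) - 1,
    sum_powersetCard_preimage_s18 e₂.injective k
      fun S => (Nat.card (H₂.induce S).ConnectedComponent : ℤ) - 1,
    sum_boole, card_powersetCard_filter_disjoint_s18, ← sum_add_distrib]
  simp only [graphB, nsmul_eq_mul, mul_comm]

end SimpleGraph.IsCliqueGluing

open SimpleGraph

section ConnSum

variable {V₁ V₂ V : Type} {G₁ : SimpleGraph V₁} {G₂ : SimpleGraph V₂} {G : SimpleGraph V} {t : ℕ}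

theorem adj_iff_of_isConnSum {f₁ : V₁ ↪ V} {f₂ : V₂ ↪ V} {F₁ : Set V₁}
    (hinter : Set.range f₁ ∩ Set.range f₂ ⊆ f₁ '' F₁) (hF₁ : G₁.IsClique F₁)
    (hadj : ∀ a b, G.Adj a b ↔ (∃ x y, G₁.Adj x y ∧ f₁ x = a ∧ f₁ y = b) ∨
      (∃ x y, G₂.Adj x y ∧ f₂ x = a ∧ f₂ y = b)) (x y : V₁) :
    G.Adj (f₁ x) (f₁ y) ↔ G₁.Adj x y := by
  refine ⟨fun h => ?_, fun h => (hadj _ _).2 (.inl ⟨x, y, h, rfl, rfl⟩)⟩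
  have mem_F₁ {z : V₁} {z' : V₂} (hz : f₂ z' = f₁ z) : z ∈ F₁ := by
    obtain ⟨w, hw, hwz⟩ := hinter ⟨⟨z, rfl⟩, z', hz⟩
    exact f₁.injective hwz ▸ hw
  rcases (hadj _ _).1 h with ⟨x', y', h', hx, hy⟩ | ⟨x', y', -, hx, hy⟩
  · rwa [← f₁.injective hx, ← f₁.injective hy]
  · exact hF₁ (mem_F₁ hx) (mem_F₁ hy) fun hxy => h.ne (congrArg f₁ hxy)

theorem IsConnSum.exists_isCliqueGluing (h : IsConnSum t G₁ G₂ G) :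
    ∃ (e₁ : G₁ ↪g G) (e₂ : G₂ ↪g G),
      IsCliqueGluing e₁ e₂ ∧ (Set.range e₁ ∩ Set.range e₂).ncard = t := by
  obtain ⟨f₁, f₂, F₁, F₂, hF₁, -, hcl₁, hcl₂, hcov, hinter, hFF, hadj⟩ := h
  have hinter₂ : Set.range f₂ ∩ Set.range f₁ ⊆ f₂ '' F₂ := by rw [Set.inter_comm, hinter, hFF]
  let e₁ : G₁ ↪g G := ⟨f₁, adj_iff_of_isConnSum hinter.subset hcl₁ hadj _ _⟩
  let e₂ : G₂ ↪g G :=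
    ⟨f₂, adj_iff_of_isConnSum hinter₂ hcl₂ (fun a b => (hadj a b).trans or_comm) _ _⟩
  have hrange : Set.range e₁ ∩ Set.range e₂ = f₁ '' F₁ := hinter
  refine ⟨e₁, e₂, ⟨fun v => Set.eq_univ_iff_forall.1 hcov v, fun a b hab => ?_, ?_⟩, ?_⟩
  · rcases (hadj a b).1 hab with ⟨x, y, -, rfl, rfl⟩ | ⟨x, y, -, rfl, rfl⟩
    · exact .inl ⟨⟨x, rfl⟩, ⟨y, rfl⟩⟩
    · exact .inr ⟨⟨x, rfl⟩, ⟨y, rfl⟩⟩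
  · rw [hrange]
    rintro _ ⟨x, hx, rfl⟩ _ ⟨y, hy, rfl⟩ hne
    exact e₁.map_adj_iff.2 (hcl₁ x hx y hy (ne_of_apply_ne _ hne))
  · rw [hrange, Set.ncard_image_of_injective _ f₁.injective, ← Nat.card_coe_set_eq, hF₁]

theorem IsConnSum.graphB_eq [Fintype V₁] [DecidableEq V₁] [Fintype V₂] [DecidableEq V₂]
    [Fintype V] [DecidableEq V] (h : IsConnSum t G₁ G₂ G) (k : ℕ) :
    graphB k G = ∑ i ∈ range (k + 1),
        (graphB i G₁ * (Fintype.card V₂ - t).choose (k - i) +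
          graphB i G₂ * (Fintype.card V₁ - t).choose (k - i)) +
      (Fintype.card V₁ + Fintype.card V₂ - 2 * t).choose k := by
  obtain ⟨e₁, e₂, hg, ht⟩ := h.exists_isCliqueGluing
  have hcard : Fintype.card V + t = Fintype.card V₁ + Fintype.card V₂ := by
    have hunion : Set.range e₁ ∪ Set.range e₂ = Set.univ :=
      Set.eq_univ_iff_forall.2 hg.mem_range_or
    have := Set.ncard_union_add_ncard_inter (Set.range e₁) (Set.range e₂)
    rwa [hunion, ht, Set.ncard_univ, Set.ncard_range_of_injective e₁.injective,
      Set.ncard_range_of_injective e₂.injective, Nat.card_eq_fintype_card,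
      Nat.card_eq_fintype_card, Nat.card_eq_fintype_card] at this
  rw [hg.graphB_eq, ht, show Fintype.card V - Fintype.card V₁ = Fintype.card V₂ - t by omega,
    show Fintype.card V - Fintype.card V₂ = Fintype.card V₁ - t by omega,
    show Fintype.card V - t = Fintype.card V₁ + Fintype.card V₂ - 2 * t by omega]

end ConnSum

namespace SimpComplex

variable {α β : Type} [DecidableEq α] [DecidableEq β]

theorem skeleton_adj_of_mem (Δ : SimpComplex β) {F : Finset β} (hF : F ∈ Δ.faces) {x y : β}
    (hx : x ∈ F) (hy : y ∈ F) (hxy : x ≠ y) : Δ.skeleton.Adj x y :=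
  ⟨hxy, Δ.down_closed F hF _ (insert_subset hx (singleton_subset_iff.2 hy))⟩

theorem pair_mem_image_faces_iff (Δ : SimpComplex β) {f : β → α} {a b : α} (hab : a ≠ b) :
    {a, b} ∈ Δ.faces.image (image f) ↔ ∃ x y, Δ.skeleton.Adj x y ∧ f x = a ∧ f y = b := by
  constructor
  · intro hmem
    obtain ⟨F, hF, hFab⟩ := mem_image.1 hmem
    obtain ⟨x, hx, rfl⟩ := mem_image.1 (hFab ▸ mem_insert_self a {b})
    obtain ⟨y, hy, rfl⟩ := mem_image.1 (hFab ▸ mem_insert_of_mem (mem_singleton_self b))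
    exact ⟨x, y, Δ.skeleton_adj_of_mem hF hx hy (ne_of_apply_ne f hab), rfl, rfl⟩
  · rintro ⟨x, y, hxy, rfl, rfl⟩
    exact mem_image.2 ⟨{x, y}, hxy.2, by rw [image_insert, image_singleton]⟩

theorem restrictGraph_eq_induce (Δ : SimpComplex α) (W : Finset α) :
    Δ.restrictGraph W = Δ.skeleton.induce (W : Set α) := by
  ext a b
  change a ≠ b ∧ _ ↔ (a : α) ≠ b ∧ _
  rw [Subtype.coe_ne_coe]
  refine and_congr_right fun _ =>
    ⟨?_, fun hab => .inl ⟨{(a : α), (b : α)}, hab, inter_eq_left.2 ?_⟩⟩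
  · rintro (⟨F, hF, hFW⟩ | ⟨F, hF, hFW⟩)
    · exact Δ.down_closed F hF _ (hFW ▸ inter_subset_left)
    · exact pair_comm (b : α) a ▸ Δ.down_closed F hF _ (hFW ▸ inter_subset_left)
  · exact insert_subset (mem_coe.1 a.2) (singleton_subset_iff.2 (mem_coe.1 b.2))

end SimpComplex

theorem complexB_eq_graphB {V : Type} [Fintype V] [DecidableEq V] (k : ℕ) (Δ : SimpComplex V) :
    complexB k Δ = graphB k Δ.skeleton := by
  simp only [complexB, graphB, SimpComplex.restrictGraph_eq_induce]

theorem IsConnSumC.skeleton {V₁ V₂ V : Type} [DecidableEq V₁] [DecidableEq V₂] [DecidableEq V]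
    {t : ℕ} {Δ₁ : SimpComplex V₁} {Δ₂ : SimpComplex V₂} {Δ : SimpComplex V} (ht : t ≠ 2)
    (h : IsConnSumC t Δ₁ Δ₂ Δ) : IsConnSum t Δ₁.skeleton Δ₂.skeleton Δ.skeleton := by
  obtain ⟨f₁, f₂, F₁, F₂, hF₁, hF₂, hF₁Δ, hF₂Δ, -, -, hcov, hinter, hFF, hfaces⟩ := h
  have pair_mem_iff {a b : V} (hab : a ≠ b) : {a, b} ∈ Δ.faces ↔
      {a, b} ∈ Δ₁.faces.image (image f₁) ∨ {a, b} ∈ Δ₂.faces.image (image f₂) := by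
    rw [hfaces, mem_sdiff, mem_union, mem_singleton, and_iff_left_iff_imp]
    intro _ h
    rw [← hF₁, ← card_image_of_injective F₁ f₁.injective, ← h, card_pair hab] at ht
    exact ht rfl
  refine ⟨f₁, f₂, F₁, F₂, by simpa, by simpa, fun x hx y hy => Δ₁.skeleton_adj_of_mem hF₁Δ hx hy,
    fun x hx y hy => Δ₂.skeleton_adj_of_mem hF₂Δ hx hy, hcov, by rw [hinter, coe_image],
    by rw [← coe_image, hFF, coe_image], fun a b => ⟨fun ⟨hab, hmem⟩ => ?_, ?_⟩⟩
  · exact ((pair_mem_iff hab).1 hmem).imp (Δ₁.pair_mem_image_faces_iff hab).1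
      (Δ₂.pair_mem_image_faces_iff hab).1
  · rintro (⟨x, y, hxy, rfl, rfl⟩ | ⟨x, y, hxy, rfl, rfl⟩)
    · have hab := f₁.injective.ne hxy.ne
      exact ⟨hab, (pair_mem_iff hab).2 (.inl ((Δ₁.pair_mem_image_faces_iff hab).2
        ⟨x, y, hxy, rfl, rfl⟩))⟩
    · have hab := f₂.injective.ne hxy.ne
      exact ⟨hab, (pair_mem_iff hab).2 (.inr ((Δ₂.pair_mem_image_faces_iff hab).2
        ⟨x, y, hxy, rfl, rfl⟩))⟩

/-- the formula for `b_k` of a `t`-connected sum (`t ≥ 3`) of two simplicial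
complexes on `n₁` and `n₂` vertices. -/
theorem bk_complex_connSum {V₁ V₂ V : Type}
    [Fintype V₁] [DecidableEq V₁] [Fintype V₂] [DecidableEq V₂] [Fintype V] [DecidableEq V]
    (t k n₁ n₂ : ℕ) (ht : 3 ≤ t)
    (Δ₁ : SimpComplex V₁) (Δ₂ : SimpComplex V₂) (Δ : SimpComplex V)
    (hn₁ : Fintype.card V₁ = n₁) (hn₂ : Fintype.card V₂ = n₂)
    (h : IsConnSumC t Δ₁ Δ₂ Δ) :
    complexB k Δ =
      (∑ i ∈ Finset.range (k + 1),
        (complexB i Δ₁ * ((n₂ - t).choose (k - i)) +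
         complexB i Δ₂ * ((n₁ - t).choose (k - i))))
      + ((n₁ + n₂ - 2 * t).choose k) := by
  subst hn₁ hn₂
  simp only [complexB_eq_graphB]
  exact (h.skeleton (by omega)).graphB_eq k
end
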